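/- arXiv:0804.2533 — 2 statements merged into one kernel-verified Lean document; each statement's English description precedes it below -/
import Mathlib

section
/- Let 𝒯 be a regular T-mesh with V⁺ crossing vertices. Then the spline space with homogeneous boundary conditions S̄(1,1,0,0,𝒯) is a finite-dimensional real vector space of dimension exactly V⁺. -/
open Filter Set MeasureTheory
open scoped Topology

noncomputable section

/-- A closed axis-aligned rectangle with positive side lengths. -/
structure Rect where
  xmin : ℝ
  xmax : ℝ
  ymin : ℝ
  ymax : ℝ
  hx : xmin < xmax
  hy : ymin < ymax

/-- The set of points of a rectangle. -/
def Rect.toSet (c : Rect) : Set (ℝ × ℝ) :=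
  Set.Icc c.xmin c.xmax ×ˢ Set.Icc c.ymin c.ymax

/-- A regular T-mesh: finitely many cells (closed axis-aligned rectangles) with pairwise
disjoint interiors whose union is a closed axis-aligned rectangle. -/
structure TMesh where
  cells : Set Rect
  outer : Rect
  finite_cells : cells.Finite
  pairwise_disjoint : cells.Pairwise fun c d => Disjoint (interior c.toSet) (interior d.toSet)
  union_eq : (⋃ c ∈ cells, c.toSet) = outer.toSet

/-- The region occupied by a T-mesh. -/
def TMesh.Omega (T : TMesh) : Set (ℝ × ℝ) := T.outer.toSet

/-- The edge skeleton of a T-mesh: the union of the boundaries of all cells. -/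
def TMesh.skeleton (T : TMesh) : Set (ℝ × ℝ) := ⋃ c ∈ T.cells, frontier c.toSet

/-- A vertex of the mesh: a corner of some cell. -/
def IsVertexOf (T : TMesh) (p : ℝ × ℝ) : Prop :=
  ∃ c ∈ T.cells, (p.1 = c.xmin ∨ p.1 = c.xmax) ∧ (p.2 = c.ymin ∨ p.2 = c.ymax)

/-- A crossing vertex: an interior vertex from which four small axis-parallel segments
stay inside the edge skeleton. -/
def IsCrossingVertex (T : TMesh) (p : ℝ × ℝ) : Prop :=
  IsVertexOf T p ∧ p ∈ interior T.Omega ∧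
    ∃ ε > (0 : ℝ), segment ℝ p (p + (ε, 0)) ⊆ T.skeleton ∧
      segment ℝ p (p - (ε, 0)) ⊆ T.skeleton ∧
      segment ℝ p (p + (0, ε)) ⊆ T.skeleton ∧
      segment ℝ p (p - (0, ε)) ⊆ T.skeleton

/-- A horizontal closed segment of positive length. -/
def IsHorizSeg (s : Set (ℝ × ℝ)) : Prop :=
  ∃ a b y : ℝ, a < b ∧ s = Set.Icc a b ×ˢ ({y} : Set ℝ)

/-- A vertical closed segment of positive length. -/
def IsVertSeg (s : Set (ℝ × ℝ)) : Prop :=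
  ∃ x a b : ℝ, a < b ∧ s = ({x} : Set ℝ) ×ˢ Set.Icc a b

/-- An l-edge: a maximal axis-parallel closed segment of positive length contained in the
edge skeleton. -/
def IsLEdge (T : TMesh) (s : Set (ℝ × ℝ)) : Prop :=
  (IsHorizSeg s ∨ IsVertSeg s) ∧ s ⊆ T.skeleton ∧
    ∀ s', (IsHorizSeg s' ∨ IsVertSeg s') → s' ⊆ T.skeleton → s ⊆ s' → s' = s

def IsBoundaryLEdge (T : TMesh) (s : Set (ℝ × ℝ)) : Prop :=
  IsLEdge T s ∧ s ⊆ frontier T.Omega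

def IsInteriorLEdge (T : TMesh) (s : Set (ℝ × ℝ)) : Prop :=
  IsLEdge T s ∧ ¬ s ⊆ frontier T.Omega

/-- There is a horizontal l-edge with endpoints `(a,y)`, `(b,y)`. -/
def HorizLEdgeAt (T : TMesh) (a b y : ℝ) : Prop :=
  a < b ∧ IsLEdge T (Set.Icc a b ×ˢ ({y} : Set ℝ))

/-- The number `V⁺` of crossing vertices. -/
def crossingCount (T : TMesh) : ℕ := {p | IsCrossingVertex T p}.ncard

/-- The number `E` of interior l-edges. -/
def interiorLEdgeCount (T : TMesh) : ℕ := {s | IsInteriorLEdge T s}.ncard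

/-- The number `F` of cells. -/
def cellCount (T : TMesh) : ℕ := T.cells.ncard

/-! Partial derivatives (within a set) and smoothness. -/

def pdXW (S : Set (ℝ × ℝ)) (f : ℝ × ℝ → ℝ) : ℝ × ℝ → ℝ :=
  fun p => derivWithin (fun x => f (x, p.2)) {x | (x, p.2) ∈ S} p.1

def pdYW (S : Set (ℝ × ℝ)) (f : ℝ × ℝ → ℝ) : ℝ × ℝ → ℝ :=
  fun p => derivWithin (fun y => f (p.1, y)) {y | (p.1, y) ∈ S} p.2

/-- The mixed partial derivative `∂^{i+j} f/∂x^i∂y^j`, taken within the set `S`. -/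
def mpW (S : Set (ℝ × ℝ)) (i j : ℕ) (f : ℝ × ℝ → ℝ) : ℝ × ℝ → ℝ :=
  (pdYW S)^[j] ((pdXW S)^[i] f)

/-- `f` has continuous mixed partials `∂^{i+j}f/∂x^i∂y^j` on `S` for all `0 ≤ i ≤ α`,
`0 ≤ j ≤ β` (smoothness indices `α, β ∈ ℤ` may be `-1`, in which case nothing is required
in that variable). -/
def SmoothWithin (S : Set (ℝ × ℝ)) (α β : ℤ) (f : ℝ × ℝ → ℝ) : Prop :=
  (∀ i j : ℕ, (i : ℤ) ≤ α → (j : ℤ) ≤ β → ContinuousOn (mpW S i j f) S) ∧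
  (∀ i : ℕ, (i : ℤ) < α → ∀ p ∈ S,
    HasDerivWithinAt (fun x => (pdXW S)^[i] f (x, p.2)) ((pdXW S)^[i+1] f p)
      {x | (x, p.2) ∈ S} p.1) ∧
  (∀ i j : ℕ, (i : ℤ) ≤ α → (j : ℤ) < β → ∀ p ∈ S,
    HasDerivWithinAt (fun y => mpW S i j f (p.1, y)) (mpW S i (j+1) f p)
      {y | (p.1, y) ∈ S} p.2)

/-- `f` agrees on each cell of `T` with a polynomial of bidegree at most `(m,n)`. -/
def PiecewisePoly (m n : ℕ) (T : TMesh) (f : ℝ × ℝ → ℝ) : Prop :=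
  ∀ c ∈ T.cells, ∃ p : MvPolynomial (Fin 2) ℝ,
    p.degreeOf 0 ≤ m ∧ p.degreeOf 1 ≤ n ∧
    ∀ q ∈ c.toSet, f q = MvPolynomial.eval ![q.1, q.2] p

/-- The spline space with homogeneous boundary conditions `S̄(m,n,α,β,T)`. -/
def SBar (m n : ℕ) (α β : ℤ) (T : TMesh) : Set (ℝ × ℝ → ℝ) :=
  {f | (∀ p, p ∉ T.Omega → f p = 0) ∧ PiecewisePoly m n T f ∧ SmoothWithin Set.univ α β f}

/-- The spline space `S(m,n,α,β,T)` over the T-mesh: membership only constrains the values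
on the occupied region `Ω` (smoothness is required within `Ω`). -/
def SOn (m n : ℕ) (α β : ℤ) (T : TMesh) : Set (ℝ × ℝ → ℝ) :=
  {f | PiecewisePoly m n T f ∧ SmoothWithin T.Omega α β f}

/-- The set of functions `S` is a linear space of dimension `d`. -/
def HasDim (S : Set (ℝ × ℝ → ℝ)) (d : ℕ) : Prop :=
  ∃ b : Fin d → (ℝ × ℝ → ℝ), (∀ i, b i ∈ S) ∧ LinearIndependent ℝ b ∧
    ∀ f ∈ S, ∃ c : Fin d → ℝ, f = ∑ i, c i • b i

/-- The linear space `S` has dimension at least `d`. -/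
def DimGE (S : Set (ℝ × ℝ → ℝ)) (d : ℕ) : Prop :=
  ∃ b : Fin d → (ℝ × ℝ → ℝ), (∀ i, b i ∈ S) ∧ LinearIndependent ℝ b

/-- The set of functions `S`, regarded as a space of functions on `Ω` (i.e. modulo the
values outside `Ω`), has dimension `d`. -/
def HasDimOn (Ω : Set (ℝ × ℝ)) (S : Set (ℝ × ℝ → ℝ)) (d : ℕ) : Prop :=
  ∃ b : Fin d → (ℝ × ℝ → ℝ), (∀ i, b i ∈ S) ∧
    LinearIndependent ℝ (fun i => Ω.restrict (b i)) ∧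
    ∀ f ∈ S, ∃ c : Fin d → ℝ, Set.EqOn f (∑ i, c i • b i) Ω

/-! The integration operator `I` and one-sided limits. -/

/-- `I(g)(x,y) = ∫_{-∞}^x ∫_{-∞}^y g(s,t) dt ds`. -/
def Ig (g : ℝ × ℝ → ℝ) : ℝ × ℝ → ℝ :=
  fun p => ∫ s in Set.Iic p.1, (∫ t in Set.Iic p.2, g (s, t))

/-- `g(s, y−)`, the one-sided limit from below in the second variable. -/
def limBelowY (g : ℝ × ℝ → ℝ) (y s : ℝ) : ℝ := limUnder (𝓝[<] y) fun t => g (s, t)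
/-- `g(s, y+)`. -/
def limAboveY (g : ℝ × ℝ → ℝ) (y s : ℝ) : ℝ := limUnder (𝓝[>] y) fun t => g (s, t)
/-- `g(x−, t)`. -/
def limLeftX (g : ℝ × ℝ → ℝ) (x t : ℝ) : ℝ := limUnder (𝓝[<] x) fun s => g (s, t)
/-- `g(x+, t)`. -/
def limRightX (g : ℝ × ℝ → ℝ) (x t : ℝ) : ℝ := limUnder (𝓝[>] x) fun s => g (s, t)

/-- The (cell-wise) partial derivative in `x`. -/
def pdX (f : ℝ × ℝ → ℝ) : ℝ × ℝ → ℝ := fun p => deriv (fun x => f (x, p.2)) p.1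
/-- The (cell-wise) partial derivative in `y`. -/
def pdY (f : ℝ × ℝ → ℝ) : ℝ × ℝ → ℝ := fun p => deriv (fun y => f (p.1, y)) p.2

/-- The union of the open interiors of the cells. -/
def cellInteriors (T : TMesh) : Set (ℝ × ℝ) := ⋃ c ∈ T.cells, interior c.toSet

open Classical in
/-- The cell-wise mixed partial derivative `∂²f/∂x∂y`, set to `0` off the cell interiors. -/
def Dmix (T : TMesh) (f : ℝ × ℝ → ℝ) : ℝ × ℝ → ℝ :=
  fun p => if p ∈ cellInteriors T then pdX (pdY f) p else 0

/-! Extended T-meshes. -/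

/-- The skeleton of a tensor-product mesh with grid lines `X 0 < ⋯ < X (2m+1)` and
`Y 0 < ⋯ < Y (2n+1)`. -/
def gridSkeleton (m n : ℕ) (X Y : ℕ → ℝ) : Set (ℝ × ℝ) :=
  {p : ℝ × ℝ | (∃ i ≤ 2 * m + 1, p.1 = X i) ∧ Y 0 ≤ p.2 ∧ p.2 ≤ Y (2 * n + 1)} ∪
  {p : ℝ × ℝ | (∃ j ≤ 2 * n + 1, p.2 = Y j) ∧ X 0 ≤ p.1 ∧ p.1 ≤ X (2 * m + 1)}

/-- The straight extensions, up to the rectangle `[x0,x1] × [y0,y1]`, of every l-edge of `T`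
having an endpoint on the boundary of the region of `T`. -/
def extSegs (T : TMesh) (x0 x1 y0 y1 : ℝ) : Set (ℝ × ℝ) :=
  {p : ℝ × ℝ | ∃ a b y, HorizLEdgeAt T a b y ∧ a = T.outer.xmin ∧
      p.2 = y ∧ x0 ≤ p.1 ∧ p.1 ≤ a} ∪
  {p : ℝ × ℝ | ∃ a b y, HorizLEdgeAt T a b y ∧ b = T.outer.xmax ∧
      p.2 = y ∧ b ≤ p.1 ∧ p.1 ≤ x1} ∪
  {p : ℝ × ℝ | ∃ x a b, a < b ∧ IsLEdge T (({x} : Set ℝ) ×ˢ Set.Icc a b) ∧ a = T.outer.ymin ∧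
      p.1 = x ∧ y0 ≤ p.2 ∧ p.2 ≤ a} ∪
  {p : ℝ × ℝ | ∃ x a b, a < b ∧ IsLEdge T (({x} : Set ℝ) ×ˢ Set.Icc a b) ∧ b = T.outer.ymax ∧
      p.1 = x ∧ b ≤ p.2 ∧ p.2 ≤ y1}

/-- `Te` is an extension of `T` associated with `S(m,n,m-1,n-1,T)`: a tensor-product mesh with
`2(m+1)` vertical and `2(n+1)` horizontal grid lines whose central rectangle is the region of
`T`, together with `T` and the straight extensions of all boundary-reaching edges of `T`. -/
def IsExtensionOf (m n : ℕ) (T Te : TMesh) : Prop :=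
  ∃ X Y : ℕ → ℝ,
    (∀ i < 2 * m + 1, X i < X (i + 1)) ∧ (∀ j < 2 * n + 1, Y j < Y (j + 1)) ∧
    X m = T.outer.xmin ∧ X (m + 1) = T.outer.xmax ∧
    Y n = T.outer.ymin ∧ Y (n + 1) = T.outer.ymax ∧
    Te.outer.xmin = X 0 ∧ Te.outer.xmax = X (2 * m + 1) ∧
    Te.outer.ymin = Y 0 ∧ Te.outer.ymax = Y (2 * n + 1) ∧
    Te.skeleton = T.skeleton ∪ gridSkeleton m n X Y ∪
      extSegs T (X 0) (X (2 * m + 1)) (Y 0) (Y (2 * n + 1))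

/-! Hierarchical T-meshes. -/

/-- `T` is a tensor-product mesh. -/
def IsTensorMesh (T : TMesh) : Prop :=
  ∃ (p q : ℕ) (x y : ℕ → ℝ), 0 < p ∧ 0 < q ∧
    (∀ i < p, x i < x (i + 1)) ∧ (∀ j < q, y j < y (j + 1)) ∧
    T.cells = {c : Rect | ∃ i < p, ∃ j < q,
      c.xmin = x i ∧ c.xmax = x (i + 1) ∧ c.ymin = y j ∧ c.ymax = y (j + 1)}

/-- The four equal subcells obtained by subdividing a cell by the two segments joining the
midpoints of opposite edges. -/
def Rect.quads (c : Rect) : Set Rect :=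
  { ⟨c.xmin, (c.xmin + c.xmax) / 2, c.ymin, (c.ymin + c.ymax) / 2,
      by linarith [c.hx], by linarith [c.hy]⟩,
    ⟨(c.xmin + c.xmax) / 2, c.xmax, c.ymin, (c.ymin + c.ymax) / 2,
      by linarith [c.hx], by linarith [c.hy]⟩,
    ⟨c.xmin, (c.xmin + c.xmax) / 2, (c.ymin + c.ymax) / 2, c.ymax,
      by linarith [c.hx], by linarith [c.hy]⟩,
    ⟨(c.xmin + c.xmax) / 2, c.xmax, (c.ymin + c.ymax) / 2, c.ymax,
      by linarith [c.hx], by linarith [c.hy]⟩ }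

/-- `T'` is obtained from `T` by subdividing exactly the cells in `S` into four quadrants. -/
def StepSubdiv (T T' : TMesh) (S : Set Rect) : Prop :=
  S ⊆ T.cells ∧ T'.outer = T.outer ∧
    T'.cells = (T.cells \ S) ∪ ⋃ c ∈ S, Rect.quads c

/-- A hierarchical T-mesh: the recursive construction `𝒯⁰, 𝒯¹, …, 𝒯^M`. -/
structure HierMesh where
  M : ℕ
  level : ℕ → TMesh
  subdivided : ℕ → Set Rect
  tensor0 : IsTensorMesh (level 0)
  step : ∀ k < M, StepSubdiv (level k) (level (k + 1)) (subdivided k)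

/-- The final mesh `𝒯 = 𝒯^M`. -/
def HierMesh.final (H : HierMesh) : TMesh := H.level H.M

/-- Two cells share a (horizontal or vertical) edge segment of positive length. -/
def EdgeAdjacent (c d : Rect) : Prop :=
  c ≠ d ∧ ∃ s : Set (ℝ × ℝ), (IsHorizSeg s ∨ IsVertSeg s) ∧ s ⊆ c.toSet ∩ d.toSet

/-- `c` is an isolated subdivided cell at step `k`: it is subdivided at step `k`, but no cell
of the level-`k` mesh sharing a horizontal or vertical edge with it is subdivided then. -/
def IsIsolatedAt (H : HierMesh) (k : ℕ) (c : Rect) : Prop :=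
  k < H.M ∧ c ∈ H.subdivided k ∧
    ∀ d ∈ (H.level k).cells, EdgeAdjacent c d → d ∉ H.subdivided k

/-- The isolated subdivided cells occurring in the construction of `H`. -/
def isoCells (H : HierMesh) : Set Rect := {c | ∃ k, IsIsolatedAt H k c}

/-- A regular T-mesh is crossing-vertex connected: any two distinct crossing vertices are
joined by a poly-line of axis-parallel mesh edges all of whose (corner) joints are crossing
vertices. -/
def IsCVConnected (T : TMesh) : Prop :=
  ∀ u v : ℝ × ℝ, IsCrossingVertex T u → IsCrossingVertex T v → u ≠ v →
    ∃ (N : ℕ) (p : ℕ → ℝ × ℝ), p 0 = u ∧ p N = v ∧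
      (∀ i < N, p i ≠ p (i + 1) ∧ segment ℝ (p i) (p (i + 1)) ⊆ T.skeleton ∧
        ((p i).1 = (p (i + 1)).1 ∨ (p i).2 = (p (i + 1)).2)) ∧
      (∀ i, 0 < i → i < N →
        (((p (i - 1)).2 = (p i).2 ∧ (p i).1 = (p (i + 1)).1) ∨
         ((p (i - 1)).1 = (p i).1 ∧ (p i).2 = (p (i + 1)).2)) →
        IsCrossingVertex T (p i))

/-- The level of an l-edge `s`: the first level of the hierarchy whose skeleton contains it. -/
def LEdgeLevel (H : HierMesh) (s : Set (ℝ × ℝ)) (k : ℕ) : Prop :=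
  s ⊆ (H.level k).skeleton ∧ ∀ j < k, ¬ s ⊆ (H.level j).skeleton

/-- `yb < yi < yt` are the heights of the two support l-edges of the horizontal l-edge
`[a,b] × {yi}` of the hierarchical mesh `H`: for a level-0 l-edge, the nearest level-0
horizontal l-edges below and above; for a level-`(k+1)` l-edge, the heights of the bottom
and top edges of a cell subdivided at step `k` whose inserted cross has its horizontal arm
on the l-edge. -/
def SupportHeights (H : HierMesh) (a b yi yb yt : ℝ) : Prop :=
  yb < yi ∧ yi < yt ∧
  ((LEdgeLevel H (Set.Icc a b ×ˢ ({yi} : Set ℝ)) 0 ∧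
     (∃ a' b', HorizLEdgeAt (H.level 0) a' b' yb) ∧
     (∃ a' b', HorizLEdgeAt (H.level 0) a' b' yt) ∧
     (∀ y a' b', HorizLEdgeAt (H.level 0) a' b' y → ¬(yb < y ∧ y < yt ∧ y ≠ yi))) ∨
   (∃ k, LEdgeLevel H (Set.Icc a b ×ˢ ({yi} : Set ℝ)) (k + 1) ∧
     ∃ c ∈ H.subdivided k, c.ymin = yb ∧ c.ymax = yt ∧ (c.ymin + c.ymax) / 2 = yi ∧
       a ≤ c.xmin ∧ c.xmax ≤ b))

/-- `U j` is a proper submesh of `U i` (its region is strictly contained in that of `U i`). -/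
def ProperSubmesh {ι : Type*} (U : ι → TMesh) (j i : ι) : Prop :=
  j ≠ i ∧ (U j).Omega ⊆ (U i).Omega ∧ (U j).Omega ≠ (U i).Omega

/-! The CVR graph. -/

/-- An edge of the CVR graph: a segment joining two consecutive crossing vertices along an
l-edge. -/
def IsCVREdge (T : TMesh) (s : Set (ℝ × ℝ)) : Prop :=
  ∃ u v : ℝ × ℝ, u ≠ v ∧ s = segment ℝ u v ∧ IsCrossingVertex T u ∧ IsCrossingVertex T v ∧
    (∃ l, IsLEdge T l ∧ segment ℝ u v ⊆ l) ∧
    ∀ w ∈ segment ℝ u v, IsCrossingVertex T w → w = u ∨ w = v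

/-- The union of the edges of the CVR graph, as a plane set. -/
def cvrGraphSet (T : TMesh) : Set (ℝ × ℝ) := ⋃₀ {s | IsCVREdge T s}

/-- The number of edges of the CVR graph. -/
def cvrEdgeCount (T : TMesh) : ℕ := {s | IsCVREdge T s}.ncard

/-- The number of bounded faces of the CVR graph: bounded connected components of the
complement of the union of its edges. -/
def cvrFaceCount (T : TMesh) : ℕ :=
  {U : Set (ℝ × ℝ) | (∃ p ∈ (cvrGraphSet T)ᶜ, U = connectedComponentIn (cvrGraphSet T)ᶜ p) ∧
     Bornology.IsBounded U}.ncard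
/-! ### Auxiliary geometry lemmas -/

namespace TMeshAux

open Rect

lemma rect_mem_toSet {c : Rect} {p : ℝ × ℝ} :
    p ∈ c.toSet ↔ (c.xmin ≤ p.1 ∧ p.1 ≤ c.xmax) ∧ (c.ymin ≤ p.2 ∧ p.2 ≤ c.ymax) := by
  simp only [Rect.toSet, Set.mem_prod, Set.mem_Icc]

lemma rect_interior (c : Rect) :
    interior c.toSet = Set.Ioo c.xmin c.xmax ×ˢ Set.Ioo c.ymin c.ymax := by
  rw [Rect.toSet, interior_prod_eq, interior_Icc, interior_Icc]

lemma rect_mem_interior {c : Rect} {p : ℝ × ℝ} :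
    p ∈ interior c.toSet ↔ (c.xmin < p.1 ∧ p.1 < c.xmax) ∧ (c.ymin < p.2 ∧ p.2 < c.ymax) := by
  rw [rect_interior]; simp [Set.mem_prod, Set.mem_Ioo]

lemma rect_isClosed (c : Rect) : IsClosed c.toSet := isClosed_Icc.prod isClosed_Icc

lemma rect_frontier (c : Rect) : frontier c.toSet = c.toSet \ interior c.toSet :=
  (rect_isClosed c).frontier_eq

lemma rect_closure_interior (c : Rect) : closure (interior c.toSet) = c.toSet := by
  rw [rect_interior, closure_prod_eq, closure_Ioo c.hx.ne, closure_Ioo c.hy.ne, Rect.toSet]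

variable {T : TMesh}

lemma cell_subset_Omega {c : Rect} (hc : c ∈ T.cells) : c.toSet ⊆ T.Omega := by
  rw [TMesh.Omega, ← T.union_eq]; exact Set.subset_biUnion_of_mem hc

lemma exists_cell_of_mem_Omega {p : ℝ × ℝ} (hp : p ∈ T.Omega) : ∃ c ∈ T.cells, p ∈ c.toSet := by
  rw [TMesh.Omega, ← T.union_eq] at hp; simpa using hp

lemma skeleton_disjoint_interior {c : Rect} (hc : c ∈ T.cells) {p : ℝ × ℝ}
    (hp : p ∈ T.skeleton) : p ∉ interior c.toSet := by
  intro hpc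
  rw [TMesh.skeleton] at hp
  simp only [Set.mem_iUnion] at hp
  obtain ⟨d, hd, hpd⟩ := hp
  by_cases hcd : d = c
  · subst hcd
    rw [rect_frontier] at hpd
    exact hpd.2 hpc
  · have hpcl : p ∈ closure (interior d.toSet) := by
      rw [rect_closure_interior]
      rw [rect_frontier] at hpd
      exact hpd.1
    have := mem_closure_iff.1 hpcl (interior c.toSet) isOpen_interior hpc
    obtain ⟨q, hq1, hq2⟩ := this
    exact Set.disjoint_left.1 (T.pairwise_disjoint hd hc hcd) hq2 hq1

lemma vertex_mem_cell {c : Rect} (h1 : p.1 = c.xmin ∨ p.1 = c.xmax)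
    (h2 : p.2 = c.ymin ∨ p.2 = c.ymax) : p ∈ c.toSet := by
  rw [rect_mem_toSet]
  rcases h1 with h1 | h1 <;> rcases h2 with h2 | h2 <;>
    simp [h1, h2, c.hx.le, c.hy.le]

lemma vertex_mem_skeleton {p : ℝ × ℝ} (h : IsVertexOf T p) : p ∈ T.skeleton := by
  obtain ⟨c, hc, h1, h2⟩ := h
  rw [TMesh.skeleton]
  refine Set.mem_biUnion hc ?_
  rw [rect_frontier]
  refine ⟨vertex_mem_cell h1 h2, ?_⟩
  rw [rect_mem_interior]
  rintro ⟨⟨ha, hb⟩, hc', hd⟩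
  rcases h1 with h1 | h1
  · rw [h1] at ha; exact lt_irrefl _ ha
  · rw [h1] at hb; exact lt_irrefl _ hb

lemma vertex_mem_Omega {p : ℝ × ℝ} (h : IsVertexOf T p) : p ∈ T.Omega := by
  obtain ⟨c, hc, h1, h2⟩ := h
  exact cell_subset_Omega hc (vertex_mem_cell h1 h2)

lemma vertex_not_interior_cell {c : Rect} (hc : c ∈ T.cells) {p : ℝ × ℝ}
    (h : IsVertexOf T p) : p ∉ interior c.toSet :=
  skeleton_disjoint_interior hc (vertex_mem_skeleton h)

lemma cell_bounds {c : Rect} (hc : c ∈ T.cells) :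
    T.outer.xmin ≤ c.xmin ∧ c.xmax ≤ T.outer.xmax ∧
    T.outer.ymin ≤ c.ymin ∧ c.ymax ≤ T.outer.ymax := by
  have h1 := cell_subset_Omega hc (vertex_mem_cell (p := (c.xmin, c.ymin)) (Or.inl rfl) (Or.inl rfl))
  have h2 := cell_subset_Omega hc (vertex_mem_cell (p := (c.xmax, c.ymax)) (Or.inr rfl) (Or.inr rfl))
  rw [TMesh.Omega, rect_mem_toSet] at h1 h2
  exact ⟨h1.1.1, h2.1.2, h1.2.1, h2.2.2⟩

lemma mem_interior_Omega {p : ℝ × ℝ} :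
    p ∈ interior T.Omega ↔
      (T.outer.xmin < p.1 ∧ p.1 < T.outer.xmax) ∧ (T.outer.ymin < p.2 ∧ p.2 < T.outer.ymax) :=
  rect_mem_interior

lemma mem_frontier_Omega {p : ℝ × ℝ} :
    p ∈ frontier T.Omega ↔ p ∈ T.Omega ∧
      (p.1 = T.outer.xmin ∨ p.1 = T.outer.xmax ∨ p.2 = T.outer.ymin ∨ p.2 = T.outer.ymax) := by
  rw [TMesh.Omega, rect_frontier, Set.mem_diff]
  constructor
  · rintro ⟨hp, hni⟩
    refine ⟨hp, ?_⟩
    rw [rect_mem_interior] at hni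
    rw [rect_mem_toSet] at hp
    by_contra hcon
    push_neg at hcon
    obtain ⟨e1, e2, e3, e4⟩ := hcon
    exact hni ⟨⟨hp.1.1.lt_of_ne (Ne.symm e1), hp.1.2.lt_of_ne e2⟩,
      ⟨hp.2.1.lt_of_ne (Ne.symm e3), hp.2.2.lt_of_ne e4⟩⟩
  · rintro ⟨hp, hd⟩
    refine ⟨hp, ?_⟩
    rw [rect_mem_interior]
    rintro ⟨⟨a1, a2⟩, a3, a4⟩
    rcases hd with h | h | h | h
    · rw [h] at a1; exact lt_irrefl _ a1
    · rw [h] at a2; exact lt_irrefl _ a2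
    · rw [h] at a3; exact lt_irrefl _ a3
    · rw [h] at a4; exact lt_irrefl _ a4

lemma vertex_interior_or_frontier {p : ℝ × ℝ} (h : IsVertexOf T p) :
    p ∈ interior T.Omega ∨ p ∈ frontier T.Omega := by
  have hp := vertex_mem_Omega h
  by_cases hi : p ∈ interior T.Omega
  · exact Or.inl hi
  · right; rw [TMesh.Omega, rect_frontier]; exact ⟨hp, hi⟩

lemma not_crossing_of_frontier {p : ℝ × ℝ} (h : p ∈ frontier T.Omega) :
    ¬ IsCrossingVertex T p := by
  rintro ⟨-, hi, -⟩
  rw [TMesh.Omega, rect_frontier] at h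
  exact h.2 hi

end TMeshAux

namespace TMeshAux

variable {T : TMesh}

/-- `v` lies in the open interior of a vertical edge of `c`. -/
def OpenEdgeV (v : ℝ × ℝ) (c : Rect) : Prop :=
  (v.1 = c.xmin ∨ v.1 = c.xmax) ∧ c.ymin < v.2 ∧ v.2 < c.ymax

/-- `v` lies in the open interior of a horizontal edge of `c`. -/
def OpenEdgeH (v : ℝ × ℝ) (c : Rect) : Prop :=
  (v.2 = c.ymin ∨ v.2 = c.ymax) ∧ c.xmin < v.1 ∧ v.1 < c.xmax

lemma le_of_eps {a b : ℝ} (h : ∀ ε : ℝ, 0 < ε → a ≤ b + ε) : a ≤ b := by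
  by_contra hc
  push_neg at hc
  have := h ((a - b)/2) (by linarith)
  linarith

lemma exists_cell_along {v : ℝ × ℝ} (hv : v ∈ interior T.Omega) (d : ℝ × ℝ) :
    ∃ c ∈ T.cells, ∃ t : ℝ, 0 < t ∧ v ∈ c.toSet ∧
      ((v.1 + t * d.1, v.2 + t * d.2) : ℝ × ℝ) ∈ c.toSet := by
  have hcont : Continuous fun s : ℝ => ((v.1 + s * d.1, v.2 + s * d.2) : ℝ × ℝ) := by
    fun_prop
  have hU : IsOpen ((fun s : ℝ => ((v.1 + s * d.1, v.2 + s * d.2) : ℝ × ℝ)) ⁻¹' interior T.Omega) :=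
    isOpen_interior.preimage hcont
  have h0 : (0 : ℝ) ∈ (fun s : ℝ => ((v.1 + s * d.1, v.2 + s * d.2) : ℝ × ℝ)) ⁻¹' interior T.Omega := by
    simpa using hv
  obtain ⟨δ, hδ, hball⟩ := Metric.isOpen_iff.1 hU 0 h0
  set t : ℕ → ℝ := fun n => δ / (2 * (n + 1)) with ht
  have htpos : ∀ n, 0 < t n := by
    intro n; rw [ht]; positivity
  have htlt : ∀ n, t n < δ := by
    intro n; rw [ht]
    rw [div_lt_iff₀ (by positivity)]
    have : (1 : ℝ) ≤ n + 1 := by exact_mod_cast Nat.one_le_iff_ne_zero.2 (Nat.succ_ne_zero n)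
    nlinarith
  have htmem : ∀ n, ((v.1 + t n * d.1, v.2 + t n * d.2) : ℝ × ℝ) ∈ T.Omega := by
    intro n
    have : t n ∈ Metric.ball (0 : ℝ) δ := by
      simp [Real.dist_eq, abs_of_pos (htpos n), htlt n]
    exact interior_subset (hball this)
  choose c hc hmem using fun n => exists_cell_of_mem_Omega (htmem n)
  haveI := T.finite_cells.to_subtype
  obtain ⟨c0, hc0⟩ := Finite.exists_infinite_fiber (fun n => (⟨c n, hc n⟩ : T.cells))
  have hS : {n | c n = (c0 : Rect)}.Infinite := by
    have := Set.infinite_coe_iff.1 hc0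
    refine this.mono ?_
    intro n hn
    simp only [Set.mem_preimage, Set.mem_singleton_iff] at hn
    simpa using congrArg Subtype.val hn
  set M : ℝ := 1 + |d.1| + |d.2| with hM
  have hMpos : 0 < M := by positivity
  have key : ∀ ε : ℝ, 0 < ε → ∃ n, c n = (c0 : Rect) ∧ t n * M < ε := by
    intro ε hε
    obtain ⟨N, hN⟩ := exists_nat_gt (δ * M / (2 * ε))
    obtain ⟨n, hnS, hn⟩ := hS.exists_gt N
    refine ⟨n, hnS, ?_⟩
    have h1 : δ * M / (2 * ε) < (n : ℝ) + 1 := by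
      refine hN.trans ?_
      have : (N : ℝ) < n := by exact_mod_cast hn
      linarith
    rw [div_lt_iff₀ (by positivity)] at h1
    have : t n * M = δ * M / (2 * (n + 1)) := by rw [ht]; ring
    rw [this, div_lt_iff₀ (by positivity)]
    nlinarith
  have habs1 : |d.1| ≤ M := by rw [hM]; have := abs_nonneg d.2; linarith
  have habs2 : |d.2| ≤ M := by rw [hM]; have := abs_nonneg d.1; linarith
  have hv0 : v ∈ (c0 : Rect).toSet := by
    rw [rect_mem_toSet]
    refine ⟨⟨le_of_eps fun ε hε => ?_, le_of_eps fun ε hε => ?_⟩,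
            le_of_eps fun ε hε => ?_, le_of_eps fun ε hε => ?_⟩ <;>
    · obtain ⟨n, hcn, hlt⟩ := key ε hε
      have hm := hmem n
      rw [hcn, rect_mem_toSet] at hm
      have e1 : t n * d.1 ≤ t n * |d.1| := mul_le_mul_of_nonneg_left (le_abs_self d.1) (htpos n).le
      have e1' : t n * (-d.1) ≤ t n * |d.1| := mul_le_mul_of_nonneg_left (neg_le_abs d.1) (htpos n).le
      have e2 : t n * d.2 ≤ t n * |d.2| := mul_le_mul_of_nonneg_left (le_abs_self d.2) (htpos n).le
      have e2' : t n * (-d.2) ≤ t n * |d.2| := mul_le_mul_of_nonneg_left (neg_le_abs d.2) (htpos n).le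
      have f1 : t n * |d.1| ≤ t n * M := mul_le_mul_of_nonneg_left habs1 (htpos n).le
      have f2 : t n * |d.2| ≤ t n * M := mul_le_mul_of_nonneg_left habs2 (htpos n).le
      simp only at hm
      nlinarith [hm.1.1, hm.1.2, hm.2.1, hm.2.2]
  obtain ⟨n0, hn0⟩ := hS.nonempty
  exact ⟨(c0 : Rect), c0.2, t n0, htpos n0, hv0, by rw [← hn0]; exact hmem n0⟩

end TMeshAux

namespace TMeshAux

variable {T : TMesh}

lemma mem_skel_of_frontier {c : Rect} (hc : c ∈ T.cells) {p : ℝ × ℝ}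
    (h1 : p ∈ c.toSet) (h2 : p ∉ interior c.toSet) : p ∈ T.skeleton := by
  rw [TMesh.skeleton]
  exact Set.mem_biUnion hc (by rw [rect_frontier]; exact ⟨h1, h2⟩)

lemma dir_right {v : ℝ × ℝ} (hvtx : IsVertexOf T v) (hv : v ∈ interior T.Omega) :
    (∃ t > 0, ∀ s : ℝ, 0 ≤ s → s ≤ t → ((v.1 + s, v.2) : ℝ × ℝ) ∈ T.skeleton) ∨
      ∃ c ∈ T.cells, v.1 = c.xmin ∧ c.ymin < v.2 ∧ v.2 < c.ymax := by
  obtain ⟨c, hc, t, ht, hvc, hmem⟩ := exists_cell_along hv (1, 0)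
  simp only [mul_one, mul_zero, add_zero] at hmem
  simp only [rect_mem_toSet] at hvc hmem
  by_cases hy : v.2 = c.ymin ∨ v.2 = c.ymax
  · left
    refine ⟨t, ht, fun s h0 hs => mem_skel_of_frontier hc ?_ ?_⟩
    · rw [rect_mem_toSet]
      constructor
      · constructor <;> simp only <;> linarith [hvc.1.1, hmem.1.2]
      · exact hvc.2
    · rw [rect_mem_interior]
      rintro ⟨-, h3, h4⟩
      rcases hy with hy | hy <;> simp only [hy] at h3 h4 <;> linarith
  · right
    push_neg at hy
    have hy1 : c.ymin < v.2 := hvc.2.1.lt_of_ne (Ne.symm hy.1)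
    have hy2 : v.2 < c.ymax := hvc.2.2.lt_of_ne hy.2
    refine ⟨c, hc, ?_, hy1, hy2⟩
    by_contra hne
    have hx1 : c.xmin < v.1 := hvc.1.1.lt_of_ne (Ne.symm hne)
    have hx2 : v.1 < c.xmax := by linarith [hmem.1.2]
    exact vertex_not_interior_cell hc hvtx (by rw [rect_mem_interior]; exact ⟨⟨hx1, hx2⟩, hy1, hy2⟩)

lemma dir_left {v : ℝ × ℝ} (hvtx : IsVertexOf T v) (hv : v ∈ interior T.Omega) :
    (∃ t > 0, ∀ s : ℝ, 0 ≤ s → s ≤ t → ((v.1 - s, v.2) : ℝ × ℝ) ∈ T.skeleton) ∨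
      ∃ c ∈ T.cells, v.1 = c.xmax ∧ c.ymin < v.2 ∧ v.2 < c.ymax := by
  obtain ⟨c, hc, t, ht, hvc, hmem⟩ := exists_cell_along hv (-1, 0)
  simp only [mul_neg, mul_one, mul_zero, add_zero] at hmem
  simp only [rect_mem_toSet] at hvc hmem
  by_cases hy : v.2 = c.ymin ∨ v.2 = c.ymax
  · left
    refine ⟨t, ht, fun s h0 hs => mem_skel_of_frontier hc ?_ ?_⟩
    · rw [rect_mem_toSet]
      constructor
      · constructor <;> simp only <;> linarith [hvc.1.2, hmem.1.1]
      · exact hvc.2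
    · rw [rect_mem_interior]
      rintro ⟨-, h3, h4⟩
      rcases hy with hy | hy <;> simp only [hy] at h3 h4 <;> linarith
  · right
    push_neg at hy
    have hy1 : c.ymin < v.2 := hvc.2.1.lt_of_ne (Ne.symm hy.1)
    have hy2 : v.2 < c.ymax := hvc.2.2.lt_of_ne hy.2
    refine ⟨c, hc, ?_, hy1, hy2⟩
    by_contra hne
    have hx2 : v.1 < c.xmax := hvc.1.2.lt_of_ne hne
    have hx1 : c.xmin < v.1 := by linarith [hmem.1.1]
    exact vertex_not_interior_cell hc hvtx (by rw [rect_mem_interior]; exact ⟨⟨hx1, hx2⟩, hy1, hy2⟩)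

lemma dir_up {v : ℝ × ℝ} (hvtx : IsVertexOf T v) (hv : v ∈ interior T.Omega) :
    (∃ t > 0, ∀ s : ℝ, 0 ≤ s → s ≤ t → ((v.1, v.2 + s) : ℝ × ℝ) ∈ T.skeleton) ∨
      ∃ c ∈ T.cells, v.2 = c.ymin ∧ c.xmin < v.1 ∧ v.1 < c.xmax := by
  obtain ⟨c, hc, t, ht, hvc, hmem⟩ := exists_cell_along hv (0, 1)
  simp only [mul_one, mul_zero, add_zero] at hmem
  simp only [rect_mem_toSet] at hvc hmem
  by_cases hx : v.1 = c.xmin ∨ v.1 = c.xmax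
  · left
    refine ⟨t, ht, fun s h0 hs => mem_skel_of_frontier hc ?_ ?_⟩
    · rw [rect_mem_toSet]
      constructor
      · exact hvc.1
      · constructor <;> simp only <;> linarith [hvc.2.1, hmem.2.2]
    · rw [rect_mem_interior]
      rintro ⟨⟨h3, h4⟩, -⟩
      rcases hx with hx | hx <;> simp only [hx] at h3 h4 <;> linarith
  · right
    push_neg at hx
    have hx1 : c.xmin < v.1 := hvc.1.1.lt_of_ne (Ne.symm hx.1)
    have hx2 : v.1 < c.xmax := hvc.1.2.lt_of_ne hx.2
    refine ⟨c, hc, ?_, hx1, hx2⟩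
    by_contra hne
    have hy1 : c.ymin < v.2 := hvc.2.1.lt_of_ne (Ne.symm hne)
    have hy2 : v.2 < c.ymax := by linarith [hmem.2.2]
    exact vertex_not_interior_cell hc hvtx (by rw [rect_mem_interior]; exact ⟨⟨hx1, hx2⟩, hy1, hy2⟩)

lemma dir_down {v : ℝ × ℝ} (hvtx : IsVertexOf T v) (hv : v ∈ interior T.Omega) :
    (∃ t > 0, ∀ s : ℝ, 0 ≤ s → s ≤ t → ((v.1, v.2 - s) : ℝ × ℝ) ∈ T.skeleton) ∨
      ∃ c ∈ T.cells, v.2 = c.ymax ∧ c.xmin < v.1 ∧ v.1 < c.xmax := by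
  obtain ⟨c, hc, t, ht, hvc, hmem⟩ := exists_cell_along hv (0, -1)
  simp only [mul_neg, mul_one, mul_zero, add_zero] at hmem
  simp only [rect_mem_toSet] at hvc hmem
  by_cases hx : v.1 = c.xmin ∨ v.1 = c.xmax
  · left
    refine ⟨t, ht, fun s h0 hs => mem_skel_of_frontier hc ?_ ?_⟩
    · rw [rect_mem_toSet]
      constructor
      · exact hvc.1
      · constructor <;> simp only <;> linarith [hvc.2.2, hmem.2.1]
    · rw [rect_mem_interior]
      rintro ⟨⟨h3, h4⟩, -⟩
      rcases hx with hx | hx <;> simp only [hx] at h3 h4 <;> linarith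
  · right
    push_neg at hx
    have hx1 : c.xmin < v.1 := hvc.1.1.lt_of_ne (Ne.symm hx.1)
    have hx2 : v.1 < c.xmax := hvc.1.2.lt_of_ne hx.2
    refine ⟨c, hc, ?_, hx1, hx2⟩
    by_contra hne
    have hy2 : v.2 < c.ymax := hvc.2.2.lt_of_ne hne
    have hy1 : c.ymin < v.2 := by linarith [hmem.2.1]
    exact vertex_not_interior_cell hc hvtx (by rw [rect_mem_interior]; exact ⟨⟨hx1, hx2⟩, hy1, hy2⟩)

lemma seg_subset {v w : ℝ × ℝ} {S : Set (ℝ × ℝ)}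
    (h : ∀ θ : ℝ, 0 ≤ θ → θ ≤ 1 → ((v.1 + θ * w.1, v.2 + θ * w.2) : ℝ × ℝ) ∈ S) :
    segment ℝ v (v + w) ⊆ S := by
  intro p hp
  rw [segment_eq_image] at hp
  obtain ⟨θ, ⟨h0, h1⟩, rfl⟩ := hp
  have : (1 - θ) • v + θ • (v + w) = ((v.1 + θ * w.1, v.2 + θ * w.2) : ℝ × ℝ) := by
    simp only [Prod.smul_mk, smul_eq_mul, Prod.mk_add_mk, Prod.ext_iff, Prod.fst_add, Prod.snd_add,
      Prod.smul_fst, Prod.smul_snd]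
    constructor <;> ring
  show (1 - θ) • v + θ • (v + w) ∈ S
  rw [this]
  exact h θ h0 h1

lemma mem_seg {v w : ℝ × ℝ} {θ : ℝ} (h0 : 0 ≤ θ) (h1 : θ ≤ 1) :
    ((v.1 + θ * w.1, v.2 + θ * w.2) : ℝ × ℝ) ∈ segment ℝ v (v + w) := by
  rw [segment_eq_image]
  refine ⟨θ, ⟨h0, h1⟩, ?_⟩
  simp only [Prod.smul_mk, smul_eq_mul, Prod.mk_add_mk, Prod.ext_iff, Prod.fst_add, Prod.snd_add,
    Prod.smul_fst, Prod.smul_snd]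
  constructor <;> ring

lemma exists_openEdge {v : ℝ × ℝ} (hvtx : IsVertexOf T v) (hv : v ∈ interior T.Omega)
    (hnc : ¬ IsCrossingVertex T v) :
    ∃ c ∈ T.cells, OpenEdgeV v c ∨ OpenEdgeH v c := by
  rcases dir_right hvtx hv with hR | ⟨c, hc, h⟩
  rotate_left
  · exact ⟨c, hc, Or.inl ⟨Or.inl h.1, h.2⟩⟩
  rcases dir_left hvtx hv with hL | ⟨c, hc, h⟩
  rotate_left
  · exact ⟨c, hc, Or.inl ⟨Or.inr h.1, h.2⟩⟩
  rcases dir_up hvtx hv with hU | ⟨c, hc, h⟩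
  rotate_left
  · exact ⟨c, hc, Or.inr ⟨Or.inl h.1, h.2⟩⟩
  rcases dir_down hvtx hv with hD | ⟨c, hc, h⟩
  rotate_left
  · exact ⟨c, hc, Or.inr ⟨Or.inr h.1, h.2⟩⟩
  exfalso
  apply hnc
  obtain ⟨t1, ht1, hR⟩ := hR
  obtain ⟨t2, ht2, hL⟩ := hL
  obtain ⟨t3, ht3, hU⟩ := hU
  obtain ⟨t4, ht4, hD⟩ := hD
  set ε := min (min t1 t2) (min t3 t4) with hε
  have hεpos : 0 < ε := by positivity
  have hε1 : ε ≤ t1 := le_trans (min_le_left _ _) (min_le_left _ _)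
  have hε2 : ε ≤ t2 := le_trans (min_le_left _ _) (min_le_right _ _)
  have hε3 : ε ≤ t3 := le_trans (min_le_right _ _) (min_le_left _ _)
  have hε4 : ε ≤ t4 := le_trans (min_le_right _ _) (min_le_right _ _)
  refine ⟨hvtx, hv, ε, hεpos, ?_, ?_, ?_, ?_⟩
  · refine seg_subset fun θ h0 h1 => ?_
    simp only [mul_zero, add_zero]
    exact hR (θ * ε) (by positivity) (by nlinarith)
  · have : v - ((ε, 0) : ℝ × ℝ) = v + ((-ε, 0) : ℝ × ℝ) := by
      simp [Prod.ext_iff, sub_eq_add_neg]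
    rw [this]
    refine seg_subset fun θ h0 h1 => ?_
    simp only [mul_zero, add_zero, mul_neg]
    rw [← sub_eq_add_neg]
    exact hL (θ * ε) (by positivity) (by nlinarith)
  · refine seg_subset fun θ h0 h1 => ?_
    simp only [mul_zero, add_zero]
    exact hU (θ * ε) (by positivity) (by nlinarith)
  · have : v - ((0, ε) : ℝ × ℝ) = v + ((0, -ε) : ℝ × ℝ) := by
      simp [Prod.ext_iff, sub_eq_add_neg]
    rw [this]
    refine seg_subset fun θ h0 h1 => ?_
    simp only [mul_zero, add_zero, mul_neg]
    rw [← sub_eq_add_neg]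
    exact hD (θ * ε) (by positivity) (by nlinarith)

lemma openEdgeV_mem {v : ℝ × ℝ} {c : Rect} (h : OpenEdgeV v c) : v ∈ c.toSet := by
  rw [rect_mem_toSet]
  obtain ⟨h1, h2, h3⟩ := h
  rcases h1 with h1 | h1 <;> rw [h1] <;>
    exact ⟨⟨by linarith [c.hx], by linarith [c.hx]⟩, h2.le, h3.le⟩

lemma openEdgeH_mem {v : ℝ × ℝ} {c : Rect} (h : OpenEdgeH v c) : v ∈ c.toSet := by
  rw [rect_mem_toSet]
  obtain ⟨h1, h2, h3⟩ := h
  rcases h1 with h1 | h1 <;> rw [h1] <;>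
    exact ⟨⟨h2.le, h3.le⟩, by linarith [c.hy], by linarith [c.hy]⟩

end TMeshAux

namespace TMeshAux

variable {T : TMesh}

lemma vertex_horiz_edge {v : ℝ × ℝ} (hvtx : IsVertexOf T v) :
    ∃ t > 0, (∀ s : ℝ, 0 < s → s ≤ t → ((v.1 + s, v.2) : ℝ × ℝ) ∈ T.skeleton) ∨
      (∀ s : ℝ, 0 < s → s ≤ t → ((v.1 - s, v.2) : ℝ × ℝ) ∈ T.skeleton) := by
  obtain ⟨e, he, h1, h2⟩ := hvtx
  refine ⟨e.xmax - e.xmin, by linarith [e.hx], ?_⟩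
  rcases h1 with h1 | h1
  · left
    intro s hs0 hst
    refine mem_skel_of_frontier he ?_ ?_
    · rw [rect_mem_toSet]
      refine ⟨⟨by simp only; linarith, by simp only; linarith⟩, ?_⟩
      rcases h2 with h2 | h2 <;> rw [h2] <;> exact ⟨by linarith [e.hy], by linarith [e.hy]⟩
    · rw [rect_mem_interior]
      rintro ⟨-, h3, h4⟩
      rcases h2 with h2 | h2 <;> simp only [h2] at h3 h4 <;> linarith
  · right
    intro s hs0 hst
    refine mem_skel_of_frontier he ?_ ?_
    · rw [rect_mem_toSet]
      refine ⟨⟨by simp only; linarith, by simp only; linarith⟩, ?_⟩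
      rcases h2 with h2 | h2 <;> rw [h2] <;> exact ⟨by linarith [e.hy], by linarith [e.hy]⟩
    · rw [rect_mem_interior]
      rintro ⟨-, h3, h4⟩
      rcases h2 with h2 | h2 <;> simp only [h2] at h3 h4 <;> linarith

lemma vertex_vert_edge {v : ℝ × ℝ} (hvtx : IsVertexOf T v) :
    ∃ t > 0, (∀ s : ℝ, 0 < s → s ≤ t → ((v.1, v.2 + s) : ℝ × ℝ) ∈ T.skeleton) ∨
      (∀ s : ℝ, 0 < s → s ≤ t → ((v.1, v.2 - s) : ℝ × ℝ) ∈ T.skeleton) := by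
  obtain ⟨e, he, h1, h2⟩ := hvtx
  refine ⟨e.ymax - e.ymin, by linarith [e.hy], ?_⟩
  rcases h2 with h2 | h2
  · left
    intro s hs0 hst
    refine mem_skel_of_frontier he ?_ ?_
    · rw [rect_mem_toSet]
      refine ⟨?_, by simp only; linarith, by simp only; linarith⟩
      rcases h1 with h1 | h1 <;> rw [h1] <;> exact ⟨by linarith [e.hx], by linarith [e.hx]⟩
    · rw [rect_mem_interior]
      rintro ⟨⟨h3, h4⟩, -⟩
      rcases h1 with h1 | h1 <;> simp only [h1] at h3 h4 <;> linarith
  · right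
    intro s hs0 hst
    refine mem_skel_of_frontier he ?_ ?_
    · rw [rect_mem_toSet]
      refine ⟨?_, by simp only; linarith, by simp only; linarith⟩
      rcases h1 with h1 | h1 <;> rw [h1] <;> exact ⟨by linarith [e.hx], by linarith [e.hx]⟩
    · rw [rect_mem_interior]
      rintro ⟨⟨h3, h4⟩, -⟩
      rcases h1 with h1 | h1 <;> simp only [h1] at h3 h4 <;> linarith

lemma not_V_xmin_xmax {v : ℝ × ℝ} {c c' : Rect} (hc : c ∈ T.cells) (hc' : c' ∈ T.cells)
    (hvtx : IsVertexOf T v) (h : OpenEdgeV v c) (hmin : v.1 = c.xmin)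
    (h' : OpenEdgeV v c') (hmax : v.1 = c'.xmax) : False := by
  obtain ⟨t, ht, hside⟩ := vertex_horiz_edge hvtx
  rcases hside with hs | hs
  · set m := min t (c.xmax - v.1) / 2 with hm
    have h1 : 0 < m := by
      have : 0 < c.xmax - v.1 := by rw [hmin]; linarith [c.hx]
      positivity
    have h2 : m ≤ t := by
      have := min_le_left t (c.xmax - v.1); rw [hm]; linarith
    have h3 : m < c.xmax - v.1 := by
      have h4 : 0 < c.xmax - v.1 := by rw [hmin]; linarith [c.hx]
      have := min_le_right t (c.xmax - v.1); rw [hm]; linarith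
    refine skeleton_disjoint_interior hc (hs m h1 h2) ?_
    rw [rect_mem_interior]
    exact ⟨⟨by simp only; rw [hmin]; linarith, by simp only; linarith⟩, h.2⟩
  · set m := min t (v.1 - c'.xmin) / 2 with hm
    have h1 : 0 < m := by
      have : 0 < v.1 - c'.xmin := by rw [hmax]; linarith [c'.hx]
      positivity
    have h2 : m ≤ t := by
      have := min_le_left t (v.1 - c'.xmin); rw [hm]; linarith
    have h3 : m < v.1 - c'.xmin := by
      have h4 : 0 < v.1 - c'.xmin := by rw [hmax]; linarith [c'.hx]
      have := min_le_right t (v.1 - c'.xmin); rw [hm]; linarith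
    refine skeleton_disjoint_interior hc' (hs m h1 h2) ?_
    rw [rect_mem_interior]
    exact ⟨⟨by simp only; linarith, by simp only; rw [hmax]; linarith⟩, h'.2⟩

lemma not_H_ymin_ymax {v : ℝ × ℝ} {c c' : Rect} (hc : c ∈ T.cells) (hc' : c' ∈ T.cells)
    (hvtx : IsVertexOf T v) (h : OpenEdgeH v c) (hmin : v.2 = c.ymin)
    (h' : OpenEdgeH v c') (hmax : v.2 = c'.ymax) : False := by
  obtain ⟨t, ht, hside⟩ := vertex_vert_edge hvtx
  rcases hside with hs | hs
  · set m := min t (c.ymax - v.2) / 2 with hm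
    have h1 : 0 < m := by
      have : 0 < c.ymax - v.2 := by rw [hmin]; linarith [c.hy]
      positivity
    have h2 : m ≤ t := by
      have := min_le_left t (c.ymax - v.2); rw [hm]; linarith
    have h3 : m < c.ymax - v.2 := by
      have h4 : 0 < c.ymax - v.2 := by rw [hmin]; linarith [c.hy]
      have := min_le_right t (c.ymax - v.2); rw [hm]; linarith
    refine skeleton_disjoint_interior hc (hs m h1 h2) ?_
    rw [rect_mem_interior]
    exact ⟨h.2, by simp only; rw [hmin]; linarith, by simp only; linarith⟩
  · set m := min t (v.2 - c'.ymin) / 2 with hm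
    have h1 : 0 < m := by
      have : 0 < v.2 - c'.ymin := by rw [hmax]; linarith [c'.hy]
      positivity
    have h2 : m ≤ t := by
      have := min_le_left t (v.2 - c'.ymin); rw [hm]; linarith
    have h3 : m < v.2 - c'.ymin := by
      have h4 : 0 < v.2 - c'.ymin := by rw [hmax]; linarith [c'.hy]
      have := min_le_right t (v.2 - c'.ymin); rw [hm]; linarith
    refine skeleton_disjoint_interior hc' (hs m h1 h2) ?_
    rw [rect_mem_interior]
    exact ⟨h'.2, by simp only; linarith, by simp only; rw [hmax]; linarith⟩

lemma not_V_H {v : ℝ × ℝ} {c c' : Rect} (hc : c ∈ T.cells) (hc' : c' ∈ T.cells)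
    (h : OpenEdgeV v c) (h' : OpenEdgeH v c') : False := by
  obtain ⟨hx, hy1, hy2⟩ := h
  obtain ⟨hy, hx1, hx2⟩ := h'
  rcases hx with hx | hx
  · -- move right: in interior of c, on horizontal edge of c'
    set m := min (c.xmax - v.1) (c'.xmax - v.1) / 2 with hm
    have hp1 : 0 < c.xmax - v.1 := by rw [hx]; linarith [c.hx]
    have hp2 : 0 < c'.xmax - v.1 := by linarith
    have h1 : 0 < m := by positivity
    have h3 : m < c.xmax - v.1 := by
      have := min_le_left (c.xmax - v.1) (c'.xmax - v.1); rw [hm]; linarith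
    have h4 : m < c'.xmax - v.1 := by
      have := min_le_right (c.xmax - v.1) (c'.xmax - v.1); rw [hm]; linarith
    have hskel : ((v.1 + m, v.2) : ℝ × ℝ) ∈ T.skeleton := by
      refine mem_skel_of_frontier hc' ?_ ?_
      · rw [rect_mem_toSet]
        refine ⟨⟨by simp only; linarith, by simp only; linarith⟩, ?_⟩
        rcases hy with hy | hy <;> rw [hy] <;>
          exact ⟨by linarith [c'.hy], by linarith [c'.hy]⟩
      · rw [rect_mem_interior]
        rintro ⟨-, h5, h6⟩
        rcases hy with hy | hy <;> simp only [hy] at h5 h6 <;> linarith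
    refine skeleton_disjoint_interior hc hskel ?_
    rw [rect_mem_interior]
    exact ⟨⟨by simp only; rw [hx]; linarith, by simp only; linarith⟩, hy1, hy2⟩
  · -- move left
    set m := min (v.1 - c.xmin) (v.1 - c'.xmin) / 2 with hm
    have hp1 : 0 < v.1 - c.xmin := by rw [hx]; linarith [c.hx]
    have hp2 : 0 < v.1 - c'.xmin := by linarith
    have h1 : 0 < m := by positivity
    have h3 : m < v.1 - c.xmin := by
      have := min_le_left (v.1 - c.xmin) (v.1 - c'.xmin); rw [hm]; linarith
    have h4 : m < v.1 - c'.xmin := by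
      have := min_le_right (v.1 - c.xmin) (v.1 - c'.xmin); rw [hm]; linarith
    have hskel : ((v.1 - m, v.2) : ℝ × ℝ) ∈ T.skeleton := by
      refine mem_skel_of_frontier hc' ?_ ?_
      · rw [rect_mem_toSet]
        refine ⟨⟨by simp only; linarith, by simp only; linarith⟩, ?_⟩
        rcases hy with hy | hy <;> rw [hy] <;>
          exact ⟨by linarith [c'.hy], by linarith [c'.hy]⟩
      · rw [rect_mem_interior]
        rintro ⟨-, h5, h6⟩
        rcases hy with hy | hy <;> simp only [hy] at h5 h6 <;> linarith
    refine skeleton_disjoint_interior hc hskel ?_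
    rw [rect_mem_interior]
    exact ⟨⟨by simp only; linarith, by simp only; rw [hx]; linarith⟩, hy1, hy2⟩

lemma interior_nonempty_eq {c c' : Rect} (hc : c ∈ T.cells) (hc' : c' ∈ T.cells)
    {p : ℝ × ℝ} (hp : p ∈ interior c.toSet) (hp' : p ∈ interior c'.toSet) : c = c' := by
  by_contra hne
  exact Set.disjoint_left.1 (T.pairwise_disjoint hc hc' hne) hp hp'

lemma V_V_same {v : ℝ × ℝ} {c c' : Rect} (hc : c ∈ T.cells) (hc' : c' ∈ T.cells)
    (hvtx : IsVertexOf T v) (h : OpenEdgeV v c) (h' : OpenEdgeV v c') : c = c' := by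
  obtain ⟨hx, hy1, hy2⟩ := h
  obtain ⟨hx', hy1', hy2'⟩ := h'
  rcases hx with hx | hx <;> rcases hx' with hx' | hx'
  · set m := min (c.xmax - v.1) (c'.xmax - v.1) / 2 with hm
    have hp1 : 0 < c.xmax - v.1 := by rw [hx]; linarith [c.hx]
    have hp2 : 0 < c'.xmax - v.1 := by rw [hx']; linarith [c'.hx]
    have h1 : 0 < m := by positivity
    have h3 : m < c.xmax - v.1 := by
      have := min_le_left (c.xmax - v.1) (c'.xmax - v.1); rw [hm]; linarith
    have h4 : m < c'.xmax - v.1 := by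
      have := min_le_right (c.xmax - v.1) (c'.xmax - v.1); rw [hm]; linarith
    refine interior_nonempty_eq hc hc' (p := ((v.1 + m, v.2) : ℝ × ℝ)) ?_ ?_ <;>
      rw [rect_mem_interior]
    · exact ⟨⟨by simp only; rw [hx]; linarith, by simp only; linarith⟩, hy1, hy2⟩
    · exact ⟨⟨by simp only; rw [hx']; linarith, by simp only; linarith⟩, hy1', hy2'⟩
  · exact absurd (not_V_xmin_xmax hc hc' hvtx ⟨Or.inl hx, hy1, hy2⟩ hx
      ⟨Or.inr hx', hy1', hy2'⟩ hx') (by simp)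
  · exact absurd (not_V_xmin_xmax hc' hc hvtx ⟨Or.inl hx', hy1', hy2'⟩ hx'
      ⟨Or.inr hx, hy1, hy2⟩ hx) (by simp)
  · set m := min (v.1 - c.xmin) (v.1 - c'.xmin) / 2 with hm
    have hp1 : 0 < v.1 - c.xmin := by rw [hx]; linarith [c.hx]
    have hp2 : 0 < v.1 - c'.xmin := by rw [hx']; linarith [c'.hx]
    have h1 : 0 < m := by positivity
    have h3 : m < v.1 - c.xmin := by
      have := min_le_left (v.1 - c.xmin) (v.1 - c'.xmin); rw [hm]; linarith
    have h4 : m < v.1 - c'.xmin := by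
      have := min_le_right (v.1 - c.xmin) (v.1 - c'.xmin); rw [hm]; linarith
    refine interior_nonempty_eq hc hc' (p := ((v.1 - m, v.2) : ℝ × ℝ)) ?_ ?_ <;>
      rw [rect_mem_interior]
    · exact ⟨⟨by simp only; linarith, by simp only; rw [hx]; linarith⟩, hy1, hy2⟩
    · exact ⟨⟨by simp only; linarith, by simp only; rw [hx']; linarith⟩, hy1', hy2'⟩

lemma H_H_same {v : ℝ × ℝ} {c c' : Rect} (hc : c ∈ T.cells) (hc' : c' ∈ T.cells)
    (hvtx : IsVertexOf T v) (h : OpenEdgeH v c) (h' : OpenEdgeH v c') : c = c' := by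
  obtain ⟨hy, hx1, hx2⟩ := h
  obtain ⟨hy', hx1', hx2'⟩ := h'
  rcases hy with hy | hy <;> rcases hy' with hy' | hy'
  · set m := min (c.ymax - v.2) (c'.ymax - v.2) / 2 with hm
    have hp1 : 0 < c.ymax - v.2 := by rw [hy]; linarith [c.hy]
    have hp2 : 0 < c'.ymax - v.2 := by rw [hy']; linarith [c'.hy]
    have h1 : 0 < m := by positivity
    have h3 : m < c.ymax - v.2 := by
      have := min_le_left (c.ymax - v.2) (c'.ymax - v.2); rw [hm]; linarith
    have h4 : m < c'.ymax - v.2 := by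
      have := min_le_right (c.ymax - v.2) (c'.ymax - v.2); rw [hm]; linarith
    refine interior_nonempty_eq hc hc' (p := ((v.1, v.2 + m) : ℝ × ℝ)) ?_ ?_ <;>
      rw [rect_mem_interior]
    · exact ⟨⟨hx1, hx2⟩, by simp only; rw [hy]; linarith, by simp only; linarith⟩
    · exact ⟨⟨hx1', hx2'⟩, by simp only; rw [hy']; linarith, by simp only; linarith⟩
  · exact absurd (not_H_ymin_ymax hc hc' hvtx ⟨Or.inl hy, hx1, hx2⟩ hy
      ⟨Or.inr hy', hx1', hx2'⟩ hy') (by simp)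
  · exact absurd (not_H_ymin_ymax hc' hc hvtx ⟨Or.inl hy', hx1', hx2'⟩ hy'
      ⟨Or.inr hy, hx1, hx2⟩ hy) (by simp)
  · set m := min (v.2 - c.ymin) (v.2 - c'.ymin) / 2 with hm
    have hp1 : 0 < v.2 - c.ymin := by rw [hy]; linarith [c.hy]
    have hp2 : 0 < v.2 - c'.ymin := by rw [hy']; linarith [c'.hy]
    have h1 : 0 < m := by positivity
    have h3 : m < v.2 - c.ymin := by
      have := min_le_left (v.2 - c.ymin) (v.2 - c'.ymin); rw [hm]; linarith
    have h4 : m < v.2 - c'.ymin := by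
      have := min_le_right (v.2 - c.ymin) (v.2 - c'.ymin); rw [hm]; linarith
    refine interior_nonempty_eq hc hc' (p := ((v.1, v.2 - m) : ℝ × ℝ)) ?_ ?_ <;>
      rw [rect_mem_interior]
    · exact ⟨⟨hx1, hx2⟩, by simp only; linarith, by simp only; rw [hy]; linarith⟩
    · exact ⟨⟨hx1', hx2'⟩, by simp only; linarith, by simp only; rw [hy']; linarith⟩

lemma edge_unique {v : ℝ × ℝ} {c c' : Rect} (hc : c ∈ T.cells) (hc' : c' ∈ T.cells)
    (hvtx : IsVertexOf T v) (h : OpenEdgeV v c ∨ OpenEdgeH v c)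
    (h' : OpenEdgeV v c' ∨ OpenEdgeH v c') : c = c' := by
  rcases h with h | h <;> rcases h' with h' | h'
  · exact V_V_same hc hc' hvtx h h'
  · exact absurd (not_V_H hc hc' h h') (by simp)
  · exact absurd (not_V_H hc' hc h' h) (by simp)
  · exact H_H_same hc hc' hvtx h h'

lemma openEdge_not_crossing {v : ℝ × ℝ} {c : Rect} (hc : c ∈ T.cells)
    (h : OpenEdgeV v c ∨ OpenEdgeH v c) : ¬ IsCrossingVertex T v := by
  rintro ⟨-, -, ε, hε, hR, hL, hU, hD⟩
  rcases h with ⟨hx, hy1, hy2⟩ | ⟨hy, hx1, hx2⟩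
  · rcases hx with hx | hx
    · -- v on left edge of c : go right into interior of c
      set m := min ε (c.xmax - v.1) / 2 with hm
      have hp : 0 < c.xmax - v.1 := by rw [hx]; linarith [c.hx]
      have h1 : 0 < m := by positivity
      have h2 : m ≤ ε := by have := min_le_left ε (c.xmax - v.1); rw [hm]; linarith
      have h3 : m < c.xmax - v.1 := by have := min_le_right ε (c.xmax - v.1); rw [hm]; linarith
      have hmem : ((v.1 + m, v.2) : ℝ × ℝ) ∈ segment ℝ v (v + ((ε, 0) : ℝ × ℝ)) := by
        have := mem_seg (v := v) (w := ((ε, 0) : ℝ × ℝ)) (θ := m / ε)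
          (by positivity) (by rw [div_le_one hε]; linarith)
        simpa [div_mul_cancel₀ _ hε.ne'] using this
      refine skeleton_disjoint_interior hc (hR hmem) ?_
      rw [rect_mem_interior]
      exact ⟨⟨by simp only; rw [hx]; linarith, by simp only; linarith⟩, hy1, hy2⟩
    · set m := min ε (v.1 - c.xmin) / 2 with hm
      have hp : 0 < v.1 - c.xmin := by rw [hx]; linarith [c.hx]
      have h1 : 0 < m := by positivity
      have h2 : m ≤ ε := by have := min_le_left ε (v.1 - c.xmin); rw [hm]; linarith
      have h3 : m < v.1 - c.xmin := by have := min_le_right ε (v.1 - c.xmin); rw [hm]; linarith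
      have hmem : ((v.1 - m, v.2) : ℝ × ℝ) ∈ segment ℝ v (v - ((ε, 0) : ℝ × ℝ)) := by
        have heq : v - ((ε, 0) : ℝ × ℝ) = v + ((-ε, 0) : ℝ × ℝ) := by
          simp [Prod.ext_iff, sub_eq_add_neg]
        rw [heq]
        have := mem_seg (v := v) (w := ((-ε, 0) : ℝ × ℝ)) (θ := m / ε)
          (by positivity) (by rw [div_le_one hε]; linarith)
        simpa [div_mul_eq_mul_div, mul_neg, div_mul_cancel₀ _ hε.ne', sub_eq_add_neg] using this
      refine skeleton_disjoint_interior hc (hL hmem) ?_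
      rw [rect_mem_interior]
      exact ⟨⟨by simp only; linarith, by simp only; rw [hx]; linarith⟩, hy1, hy2⟩
  · rcases hy with hy | hy
    · set m := min ε (c.ymax - v.2) / 2 with hm
      have hp : 0 < c.ymax - v.2 := by rw [hy]; linarith [c.hy]
      have h1 : 0 < m := by positivity
      have h2 : m ≤ ε := by have := min_le_left ε (c.ymax - v.2); rw [hm]; linarith
      have h3 : m < c.ymax - v.2 := by have := min_le_right ε (c.ymax - v.2); rw [hm]; linarith
      have hmem : ((v.1, v.2 + m) : ℝ × ℝ) ∈ segment ℝ v (v + ((0, ε) : ℝ × ℝ)) := by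
        have := mem_seg (v := v) (w := ((0, ε) : ℝ × ℝ)) (θ := m / ε)
          (by positivity) (by rw [div_le_one hε]; linarith)
        simpa [div_mul_cancel₀ _ hε.ne'] using this
      refine skeleton_disjoint_interior hc (hU hmem) ?_
      rw [rect_mem_interior]
      exact ⟨⟨hx1, hx2⟩, by simp only; rw [hy]; linarith, by simp only; linarith⟩
    · set m := min ε (v.2 - c.ymin) / 2 with hm
      have hp : 0 < v.2 - c.ymin := by rw [hy]; linarith [c.hy]
      have h1 : 0 < m := by positivity
      have h2 : m ≤ ε := by have := min_le_left ε (v.2 - c.ymin); rw [hm]; linarith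
      have h3 : m < v.2 - c.ymin := by have := min_le_right ε (v.2 - c.ymin); rw [hm]; linarith
      have hmem : ((v.1, v.2 - m) : ℝ × ℝ) ∈ segment ℝ v (v - ((0, ε) : ℝ × ℝ)) := by
        have heq : v - ((0, ε) : ℝ × ℝ) = v + ((0, -ε) : ℝ × ℝ) := by
          simp [Prod.ext_iff, sub_eq_add_neg]
        rw [heq]
        have := mem_seg (v := v) (w := ((0, -ε) : ℝ × ℝ)) (θ := m / ε)
          (by positivity) (by rw [div_le_one hε]; linarith)
        simpa [div_mul_eq_mul_div, mul_neg, div_mul_cancel₀ _ hε.ne', sub_eq_add_neg] using this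
      refine skeleton_disjoint_interior hc (hD hmem) ?_
      rw [rect_mem_interior]
      exact ⟨⟨hx1, hx2⟩, by simp only; linarith, by simp only; rw [hy]; linarith⟩

end TMeshAux

namespace TMeshAux

/-- Bilinear interpolation of the corner values of `g` on the rectangle `c`. -/
def interp (c : Rect) (g : ℝ × ℝ → ℝ) (q : ℝ × ℝ) : ℝ :=
  (1 - (q.1 - c.xmin) / (c.xmax - c.xmin)) * (1 - (q.2 - c.ymin) / (c.ymax - c.ymin)) *
      g (c.xmin, c.ymin)
  + ((q.1 - c.xmin) / (c.xmax - c.xmin)) * (1 - (q.2 - c.ymin) / (c.ymax - c.ymin)) *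
      g (c.xmax, c.ymin)
  + (1 - (q.1 - c.xmin) / (c.xmax - c.xmin)) * ((q.2 - c.ymin) / (c.ymax - c.ymin)) *
      g (c.xmin, c.ymax)
  + ((q.1 - c.xmin) / (c.xmax - c.xmin)) * ((q.2 - c.ymin) / (c.ymax - c.ymin)) *
      g (c.xmax, c.ymax)

variable {c : Rect} {g : ℝ × ℝ → ℝ}

lemma hDx (c : Rect) : c.xmax - c.xmin ≠ 0 := sub_ne_zero.2 c.hx.ne'
lemma hDy (c : Rect) : c.ymax - c.ymin ≠ 0 := sub_ne_zero.2 c.hy.ne'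

lemma interp_corner_mm : interp c g (c.xmin, c.ymin) = g (c.xmin, c.ymin) := by
  simp only [interp]; field_simp; ring

lemma interp_corner_Mm : interp c g (c.xmax, c.ymin) = g (c.xmax, c.ymin) := by
  simp only [interp]
  rw [div_self (hDx c)]
  field_simp
  ring

lemma interp_corner_mM : interp c g (c.xmin, c.ymax) = g (c.xmin, c.ymax) := by
  simp only [interp]
  rw [div_self (hDy c)]
  field_simp
  ring

lemma interp_corner_MM : interp c g (c.xmax, c.ymax) = g (c.xmax, c.ymax) := by
  simp only [interp]
  rw [div_self (hDx c), div_self (hDy c)]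
  field_simp
  ring

lemma interp_affine_y (x a b μ : ℝ) :
    interp c g (x, μ * a + (1 - μ) * b) =
      μ * interp c g (x, a) + (1 - μ) * interp c g (x, b) := by
  simp only [interp]
  field_simp
  ring

lemma interp_affine_x (y a b μ : ℝ) :
    interp c g (μ * a + (1 - μ) * b, y) =
      μ * interp c g (a, y) + (1 - μ) * interp c g (b, y) := by
  simp only [interp]
  field_simp
  ring

lemma one_sub_frac {a b y : ℝ} (h : b - a ≠ 0) : 1 - (y - a) / (b - a) = (b - y) / (b - a) := by
  field_simp
  ring

lemma interp_left_edge (y : ℝ) :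
    interp c g (c.xmin, y) =
      ((c.ymax - y) * g (c.xmin, c.ymin) + (y - c.ymin) * g (c.xmin, c.ymax)) /
        (c.ymax - c.ymin) := by
  simp only [interp, sub_self, zero_div, mul_zero, zero_mul, mul_one, add_zero, sub_zero,
    one_mul, zero_add]
  rw [one_sub_frac (hDy c), div_mul_eq_mul_div, div_mul_eq_mul_div, ← add_div]

lemma interp_right_edge (y : ℝ) :
    interp c g (c.xmax, y) =
      ((c.ymax - y) * g (c.xmax, c.ymin) + (y - c.ymin) * g (c.xmax, c.ymax)) /
        (c.ymax - c.ymin) := by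
  simp only [interp, div_self (hDx c), sub_self, mul_zero, zero_mul, mul_one, add_zero,
    sub_zero, one_mul, zero_add]
  rw [one_sub_frac (hDy c), div_mul_eq_mul_div, div_mul_eq_mul_div, ← add_div]

lemma interp_bot_edge (x : ℝ) :
    interp c g (x, c.ymin) =
      ((c.xmax - x) * g (c.xmin, c.ymin) + (x - c.xmin) * g (c.xmax, c.ymin)) /
        (c.xmax - c.xmin) := by
  simp only [interp, sub_self, zero_div, mul_zero, zero_mul, mul_one, add_zero, sub_zero,
    one_mul, zero_add]
  rw [one_sub_frac (hDx c), div_mul_eq_mul_div, div_mul_eq_mul_div, ← add_div]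

lemma interp_top_edge (x : ℝ) :
    interp c g (x, c.ymax) =
      ((c.xmax - x) * g (c.xmin, c.ymax) + (x - c.xmin) * g (c.xmax, c.ymax)) /
        (c.xmax - c.xmin) := by
  simp only [interp, div_self (hDy c), sub_self, mul_zero, zero_mul, mul_one, add_zero,
    sub_zero, one_mul, zero_add]
  rw [one_sub_frac (hDx c), div_mul_eq_mul_div, div_mul_eq_mul_div, ← add_div]

lemma interp_continuous : Continuous (interp c g) := by
  have hu : Continuous fun q : ℝ × ℝ => (q.1 - c.xmin) / (c.xmax - c.xmin) :=
    (continuous_fst.sub continuous_const).div_const _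
  have hw : Continuous fun q : ℝ × ℝ => (q.2 - c.ymin) / (c.ymax - c.ymin) :=
    (continuous_snd.sub continuous_const).div_const _
  exact (((((continuous_const.sub hu).mul (continuous_const.sub hw)).mul continuous_const).add
    ((hu.mul (continuous_const.sub hw)).mul continuous_const)).add
    (((continuous_const.sub hu).mul hw).mul continuous_const)).add
    ((hu.mul hw).mul continuous_const)

lemma interp_coeffs :
    ∃ A B C D : ℝ, ∀ x y : ℝ, interp c g (x, y) = A + B * x + C * y + D * (x * y) := by
  refine ⟨interp c g (0, 0), interp c g (1, 0) - interp c g (0, 0),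
    interp c g (0, 1) - interp c g (0, 0),
    interp c g (1, 1) - interp c g (1, 0) - interp c g (0, 1) + interp c g (0, 0),
    fun x y => ?_⟩
  simp only [interp]
  field_simp
  ring

open MvPolynomial in
lemma interp_poly :
    ∃ p : MvPolynomial (Fin 2) ℝ, p.degreeOf 0 ≤ 1 ∧ p.degreeOf 1 ≤ 1 ∧
      ∀ q : ℝ × ℝ, interp c g q = MvPolynomial.eval ![q.1, q.2] p := by
  obtain ⟨A, B, C', D, hABCD⟩ := interp_coeffs (c := c) (g := g)
  refine ⟨MvPolynomial.C A + MvPolynomial.C B * X 0 + MvPolynomial.C C' * X 1 +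
    MvPolynomial.C D * (X 0 * X 1), ?_, ?_, ?_⟩
  · refine le_trans (degreeOf_add_le _ _ _) (max_le (le_trans (degreeOf_add_le _ _ _)
      (max_le (le_trans (degreeOf_add_le _ _ _) (max_le ?_ ?_)) ?_)) ?_)
    · simp [degreeOf_C]
    · exact le_trans (degreeOf_mul_le _ _ _) (by simp [degreeOf_C, degreeOf_X])
    · exact le_trans (degreeOf_mul_le _ _ _) (by simp [degreeOf_C, degreeOf_X])
    · refine le_trans (degreeOf_mul_le _ _ _) ?_
      have := degreeOf_mul_le (0 : Fin 2) (X 0 : MvPolynomial (Fin 2) ℝ) (X 1)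
      simp only [degreeOf_C, degreeOf_X, zero_add]
      simpa [degreeOf_X] using this
  · refine le_trans (degreeOf_add_le _ _ _) (max_le (le_trans (degreeOf_add_le _ _ _)
      (max_le (le_trans (degreeOf_add_le _ _ _) (max_le ?_ ?_)) ?_)) ?_)
    · simp [degreeOf_C]
    · exact le_trans (degreeOf_mul_le _ _ _) (by simp [degreeOf_C, degreeOf_X])
    · exact le_trans (degreeOf_mul_le _ _ _) (by simp [degreeOf_C, degreeOf_X])
    · refine le_trans (degreeOf_mul_le _ _ _) ?_
      have := degreeOf_mul_le (1 : Fin 2) (X 0 : MvPolynomial (Fin 2) ℝ) (X 1)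
      simp only [degreeOf_C, degreeOf_X, zero_add]
      simpa [degreeOf_X] using this
  · intro q
    have := hABCD q.1 q.2
    simp only [map_add, map_mul, eval_C, eval_X, Matrix.cons_val_zero, Matrix.cons_val_one,
      Matrix.head_cons]
    rw [← this]

open MvPolynomial in
lemma eval_affine_snd {p : MvPolynomial (Fin 2) ℝ} (h : p.degreeOf 1 ≤ 1) (x : ℝ) :
    ∃ A B : ℝ, ∀ y : ℝ, MvPolynomial.eval ![x, y] p = A + B * y := by
  classical
  refine ⟨∑ m ∈ p.support, if m 1 = 0 then MvPolynomial.coeff m p * x ^ (m 0) else 0,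
    ∑ m ∈ p.support, if m 1 = 0 then 0 else MvPolynomial.coeff m p * x ^ (m 0), fun y => ?_⟩
  rw [eval_eq']
  have key : ∀ m ∈ p.support, MvPolynomial.coeff m p * ∏ i, (![x, y] : Fin 2 → ℝ) i ^ m i =
      (if m 1 = 0 then MvPolynomial.coeff m p * x ^ (m 0) else 0) +
        (if m 1 = 0 then 0 else MvPolynomial.coeff m p * x ^ (m 0)) * y := by
    intro m hm
    have hm1 : m 1 ≤ 1 := le_trans (monomial_le_degreeOf 1 hm) h
    rw [Fin.prod_univ_two]
    simp only [Matrix.cons_val_zero, Matrix.cons_val_one, Matrix.head_cons]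
    rcases Nat.le_one_iff_eq_zero_or_eq_one.1 hm1 with h0 | h0 <;> rw [h0] <;> simp <;> ring
  rw [Finset.sum_congr rfl key, Finset.sum_add_distrib, ← Finset.sum_mul]

open MvPolynomial in
lemma eval_affine_fst {p : MvPolynomial (Fin 2) ℝ} (h : p.degreeOf 0 ≤ 1) (y : ℝ) :
    ∃ A B : ℝ, ∀ x : ℝ, MvPolynomial.eval ![x, y] p = A + B * x := by
  classical
  refine ⟨∑ m ∈ p.support, if m 0 = 0 then MvPolynomial.coeff m p * y ^ (m 1) else 0,
    ∑ m ∈ p.support, if m 0 = 0 then 0 else MvPolynomial.coeff m p * y ^ (m 1), fun x => ?_⟩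
  rw [eval_eq']
  have key : ∀ m ∈ p.support, MvPolynomial.coeff m p * ∏ i, (![x, y] : Fin 2 → ℝ) i ^ m i =
      (if m 0 = 0 then MvPolynomial.coeff m p * y ^ (m 1) else 0) +
        (if m 0 = 0 then 0 else MvPolynomial.coeff m p * y ^ (m 1)) * x := by
    intro m hm
    have hm0 : m 0 ≤ 1 := le_trans (monomial_le_degreeOf 0 hm) h
    rw [Fin.prod_univ_two]
    simp only [Matrix.cons_val_zero, Matrix.cons_val_one, Matrix.head_cons]
    rcases Nat.le_one_iff_eq_zero_or_eq_one.1 hm0 with h0 | h0 <;> rw [h0] <;> simp <;> ring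
  rw [Finset.sum_congr rfl key, Finset.sum_add_distrib, ← Finset.sum_mul]

lemma affine_zero {A B u1 u2 : ℝ} (hne : u1 ≠ u2) (h1 : A + B * u1 = 0)
    (h2 : A + B * u2 = 0) : ∀ u, A + B * u = 0 := by
  have hB : B = 0 := by
    have h3 : B * (u1 - u2) = 0 := by linarith
    exact (mul_eq_zero.1 h3).resolve_right (sub_ne_zero.2 hne)
  intro u
  rw [hB] at h1 ⊢
  simpa using h1

end TMeshAux

namespace TMeshAux

variable {T : TMesh} {g : ℝ × ℝ → ℝ}

/-- Compatibility conditions on a prescribed set of vertex values. -/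
def GoodVals (T : TMesh) (g : ℝ × ℝ → ℝ) : Prop :=
  (∀ v : ℝ × ℝ, IsVertexOf T v → v ∈ frontier T.Omega → g v = 0) ∧
  (∀ v : ℝ × ℝ, IsVertexOf T v → v ∈ interior T.Omega → ∀ c ∈ T.cells,
    (OpenEdgeV v c →
      g v = ((c.ymax - v.2) * g (v.1, c.ymin) + (v.2 - c.ymin) * g (v.1, c.ymax)) /
        (c.ymax - c.ymin)) ∧
    (OpenEdgeH v c →
      g v = ((c.xmax - v.1) * g (c.xmin, v.2) + (v.1 - c.xmin) * g (c.xmax, v.2)) /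
        (c.xmax - c.xmin)))

lemma corner_vertex {c : Rect} (hc : c ∈ T.cells) {a b : ℝ} (h1 : a = c.xmin ∨ a = c.xmax)
    (h2 : b = c.ymin ∨ b = c.ymax) : IsVertexOf T ((a, b) : ℝ × ℝ) :=
  ⟨c, hc, by simpa using h1, by simpa using h2⟩

lemma corner_mem_Omega {c : Rect} (hc : c ∈ T.cells) {a b : ℝ} (h1 : a = c.xmin ∨ a = c.xmax)
    (h2 : b = c.ymin ∨ b = c.ymax) : ((a, b) : ℝ × ℝ) ∈ T.Omega :=
  cell_subset_Omega hc (vertex_mem_cell (by simpa using h1) (by simpa using h2))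

/-- If the left edge of `c` lies on the left side of `Ω` then `interp` vanishes on it. -/
lemma interp_zero_left (hg : GoodVals T g) {c : Rect} (hc : c ∈ T.cells)
    (hxl : c.xmin = T.outer.xmin) (y : ℝ) : interp c g (c.xmin, y) = 0 := by
  have hz1 : g (c.xmin, c.ymin) = 0 := by
    refine hg.1 _ (corner_vertex hc (Or.inl rfl) (Or.inl rfl)) ?_
    exact mem_frontier_Omega.2 ⟨corner_mem_Omega hc (Or.inl rfl) (Or.inl rfl), Or.inl hxl⟩
  have hz2 : g (c.xmin, c.ymax) = 0 := by
    refine hg.1 _ (corner_vertex hc (Or.inl rfl) (Or.inr rfl)) ?_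
    exact mem_frontier_Omega.2 ⟨corner_mem_Omega hc (Or.inl rfl) (Or.inr rfl), Or.inl hxl⟩
  rw [interp_left_edge, hz1, hz2]
  simp

lemma interp_zero_right (hg : GoodVals T g) {c : Rect} (hc : c ∈ T.cells)
    (hxr : c.xmax = T.outer.xmax) (y : ℝ) : interp c g (c.xmax, y) = 0 := by
  have hz1 : g (c.xmax, c.ymin) = 0 := by
    refine hg.1 _ (corner_vertex hc (Or.inr rfl) (Or.inl rfl)) ?_
    exact mem_frontier_Omega.2 ⟨corner_mem_Omega hc (Or.inr rfl) (Or.inl rfl),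
      Or.inr (Or.inl hxr)⟩
  have hz2 : g (c.xmax, c.ymax) = 0 := by
    refine hg.1 _ (corner_vertex hc (Or.inr rfl) (Or.inr rfl)) ?_
    exact mem_frontier_Omega.2 ⟨corner_mem_Omega hc (Or.inr rfl) (Or.inr rfl),
      Or.inr (Or.inl hxr)⟩
  rw [interp_right_edge, hz1, hz2]
  simp

lemma interp_zero_bot (hg : GoodVals T g) {c : Rect} (hc : c ∈ T.cells)
    (hyb : c.ymin = T.outer.ymin) (x : ℝ) : interp c g (x, c.ymin) = 0 := by
  have hz1 : g (c.xmin, c.ymin) = 0 := by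
    refine hg.1 _ (corner_vertex hc (Or.inl rfl) (Or.inl rfl)) ?_
    exact mem_frontier_Omega.2 ⟨corner_mem_Omega hc (Or.inl rfl) (Or.inl rfl),
      Or.inr (Or.inr (Or.inl hyb))⟩
  have hz2 : g (c.xmax, c.ymin) = 0 := by
    refine hg.1 _ (corner_vertex hc (Or.inr rfl) (Or.inl rfl)) ?_
    exact mem_frontier_Omega.2 ⟨corner_mem_Omega hc (Or.inr rfl) (Or.inl rfl),
      Or.inr (Or.inr (Or.inl hyb))⟩
  rw [interp_bot_edge, hz1, hz2]
  simp

lemma interp_zero_top (hg : GoodVals T g) {c : Rect} (hc : c ∈ T.cells)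
    (hyt : c.ymax = T.outer.ymax) (x : ℝ) : interp c g (x, c.ymax) = 0 := by
  have hz1 : g (c.xmin, c.ymax) = 0 := by
    refine hg.1 _ (corner_vertex hc (Or.inl rfl) (Or.inr rfl)) ?_
    exact mem_frontier_Omega.2 ⟨corner_mem_Omega hc (Or.inl rfl) (Or.inr rfl),
      Or.inr (Or.inr (Or.inr hyt))⟩
  have hz2 : g (c.xmax, c.ymax) = 0 := by
    refine hg.1 _ (corner_vertex hc (Or.inr rfl) (Or.inr rfl)) ?_
    exact mem_frontier_Omega.2 ⟨corner_mem_Omega hc (Or.inr rfl) (Or.inr rfl),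
      Or.inr (Or.inr (Or.inr hyt))⟩
  rw [interp_top_edge, hz1, hz2]
  simp

/-- Fundamental lemma: `interp` on a cell reproduces `g` at every vertex of the mesh
that belongs to that cell. -/
lemma interp_vertex (hg : GoodVals T g) {c : Rect} (hc : c ∈ T.cells) {w : ℝ × ℝ}
    (hw : IsVertexOf T w) (hwc : w ∈ c.toSet) : interp c g w = g w := by
  have hni : w ∉ interior c.toSet := vertex_not_interior_cell hc hw
  rw [rect_mem_interior] at hni
  rw [rect_mem_toSet] at hwc
  have hb := cell_bounds hc
  by_cases hx : w.1 = c.xmin ∨ w.1 = c.xmax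
  · by_cases hy : w.2 = c.ymin ∨ w.2 = c.ymax
    · -- corner of c
      rcases hx with hx | hx <;> rcases hy with hy | hy
      · have hww : w = ((c.xmin, c.ymin) : ℝ × ℝ) := Prod.ext hx hy
        rw [hww]; exact interp_corner_mm
      · have hww : w = ((c.xmin, c.ymax) : ℝ × ℝ) := Prod.ext hx hy
        rw [hww]; exact interp_corner_mM
      · have hww : w = ((c.xmax, c.ymin) : ℝ × ℝ) := Prod.ext hx hy
        rw [hww]; exact interp_corner_Mm
      · have hww : w = ((c.xmax, c.ymax) : ℝ × ℝ) := Prod.ext hx hy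
        rw [hww]; exact interp_corner_MM
    · -- open vertical edge
      push_neg at hy
      have hy1 : c.ymin < w.2 := hwc.2.1.lt_of_ne (Ne.symm hy.1)
      have hy2 : w.2 < c.ymax := hwc.2.2.lt_of_ne hy.2
      have hoe : OpenEdgeV w c := ⟨hx, hy1, hy2⟩
      rcases vertex_interior_or_frontier hw with hint | hfr
      · have heq := ((hg.2 w hw hint c hc).1 hoe)
        rw [heq]
        rcases hx with hx | hx
        · have hww : w = ((c.xmin, w.2) : ℝ × ℝ) := Prod.ext hx rfl
          rw [hww] at heq ⊢
          rw [interp_left_edge]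
        · have hww : w = ((c.xmax, w.2) : ℝ × ℝ) := Prod.ext hx rfl
          rw [hww] at heq ⊢
          rw [interp_right_edge]
      · have hgw : g w = 0 := hg.1 w hw hfr
        rw [hgw]
        rcases (mem_frontier_Omega.1 hfr).2 with hs | hs | hs | hs
        · rcases hx with hx | hx
          · have hxl : c.xmin = T.outer.xmin := by rw [← hx, hs]
            have hww : w = ((c.xmin, w.2) : ℝ × ℝ) := Prod.ext hx rfl
            rw [hww]; exact interp_zero_left hg hc hxl w.2
          · exfalso; rw [hx] at hs; linarith [c.hx, hb.1]
        · rcases hx with hx | hx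
          · exfalso; rw [hx] at hs; linarith [c.hx, hb.2.1]
          · have hxr : c.xmax = T.outer.xmax := by rw [← hx, hs]
            have hww : w = ((c.xmax, w.2) : ℝ × ℝ) := Prod.ext hx rfl
            rw [hww]; exact interp_zero_right hg hc hxr w.2
        · exfalso; rw [hs] at hy1; linarith [hb.2.2.1]
        · exfalso; rw [hs] at hy2; linarith [hb.2.2.2]
  · -- open horizontal edge
    push_neg at hx
    have hx1 : c.xmin < w.1 := hwc.1.1.lt_of_ne (Ne.symm hx.1)
    have hx2 : w.1 < c.xmax := hwc.1.2.lt_of_ne hx.2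
    have hy : w.2 = c.ymin ∨ w.2 = c.ymax := by
      by_contra hcon
      push_neg at hcon
      exact hni ⟨⟨hx1, hx2⟩, hwc.2.1.lt_of_ne (Ne.symm hcon.1), hwc.2.2.lt_of_ne hcon.2⟩
    have hoe : OpenEdgeH w c := ⟨hy, hx1, hx2⟩
    rcases vertex_interior_or_frontier hw with hint | hfr
    · have heq := ((hg.2 w hw hint c hc).2 hoe)
      rw [heq]
      rcases hy with hy | hy
      · have hww : w = ((w.1, c.ymin) : ℝ × ℝ) := Prod.ext rfl hy
        rw [hww] at heq ⊢
        rw [interp_bot_edge]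
      · have hww : w = ((w.1, c.ymax) : ℝ × ℝ) := Prod.ext rfl hy
        rw [hww] at heq ⊢
        rw [interp_top_edge]
    · have hgw : g w = 0 := hg.1 w hw hfr
      rw [hgw]
      rcases (mem_frontier_Omega.1 hfr).2 with hs | hs | hs | hs
      · exfalso; rw [hs] at hx1; linarith [hb.1]
      · exfalso; rw [hs] at hx2; linarith [hb.2.1]
      · rcases hy with hy | hy
        · have hyb : c.ymin = T.outer.ymin := by rw [← hy, hs]
          have hww : w = ((w.1, c.ymin) : ℝ × ℝ) := Prod.ext rfl hy
          rw [hww]; exact interp_zero_bot hg hc hyb w.1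
        · exfalso; rw [hy] at hs; linarith [c.hy, hb.2.2.1]
      · rcases hy with hy | hy
        · exfalso; rw [hy] at hs; linarith [c.hy, hb.2.2.2]
        · have hyt : c.ymax = T.outer.ymax := by rw [← hy, hs]
          have hww : w = ((w.1, c.ymax) : ℝ × ℝ) := Prod.ext rfl hy
          rw [hww]; exact interp_zero_top hg hc hyt w.1

end TMeshAux

namespace TMeshAux

variable {T : TMesh} {g : ℝ × ℝ → ℝ}

/-- Two cells assign the same interpolated value to any common point. -/
lemma interp_agree (hg : GoodVals T g) {c d : Rect} (hc : c ∈ T.cells) (hd : d ∈ T.cells)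
    {p : ℝ × ℝ} (hpc : p ∈ c.toSet) (hpd : p ∈ d.toSet) : interp c g p = interp d g p := by
  by_cases hcd : c = d
  · rw [hcd]
  have hpc' := hpc; have hpd' := hpd
  rw [rect_mem_toSet] at hpc' hpd'
  set a1 := max c.xmin d.xmin with ha1d
  set b1 := min c.xmax d.xmax with hb1d
  set a2 := max c.ymin d.ymin with ha2d
  set b2 := min c.ymax d.ymax with hb2d
  have ha1 : a1 ≤ p.1 := max_le hpc'.1.1 hpd'.1.1
  have hb1 : p.1 ≤ b1 := le_min hpc'.1.2 hpd'.1.2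
  have ha2 : a2 ≤ p.2 := max_le hpc'.2.1 hpd'.2.1
  have hb2 : p.2 ≤ b2 := le_min hpc'.2.2 hpd'.2.2
  have hdeg : a1 = b1 ∨ a2 = b2 := by
    by_contra hcon
    push_neg at hcon
    have h1 : a1 < b1 := lt_of_le_of_ne (ha1.trans hb1) hcon.1
    have h2 : a2 < b2 := lt_of_le_of_ne (ha2.trans hb2) hcon.2
    refine hcd (interior_nonempty_eq hc hd (p := (((a1 + b1) / 2, (a2 + b2) / 2) : ℝ × ℝ))
      ?_ ?_) <;> rw [rect_mem_interior] <;> simp only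
    · exact ⟨⟨by linarith [le_max_left c.xmin d.xmin, min_le_left c.xmax d.xmax],
        by linarith [le_max_left c.xmin d.xmin, min_le_left c.xmax d.xmax]⟩,
        by linarith [le_max_left c.ymin d.ymin, min_le_left c.ymax d.ymax],
        by linarith [le_max_left c.ymin d.ymin, min_le_left c.ymax d.ymax]⟩
    · exact ⟨⟨by linarith [le_max_right c.xmin d.xmin, min_le_right c.xmax d.xmax],
        by linarith [le_max_right c.xmin d.xmin, min_le_right c.xmax d.xmax]⟩,
        by linarith [le_max_right c.ymin d.ymin, min_le_right c.ymax d.ymax],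
        by linarith [le_max_right c.ymin d.ymin, min_le_right c.ymax d.ymax]⟩
  rcases hdeg with hdeg | hdeg
  · -- the intersection is contained in a vertical line
    have hx0 : p.1 = a1 := le_antisymm (hdeg ▸ hb1) ha1
    have hxc : a1 = c.xmin ∨ a1 = c.xmax := by
      rcases max_choice c.xmin d.xmin with h | h
      · exact Or.inl (by rw [ha1d, h])
      · rcases min_choice c.xmax d.xmax with h' | h'
        · exact Or.inr (by rw [hdeg, hb1d, h'])
        · exfalso
          have e1 : a1 = d.xmin := by rw [ha1d, h]
          have e2 : a1 = d.xmax := by rw [hdeg, hb1d, h']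
          have := d.hx; rw [← e1, ← e2] at this; exact lt_irrefl _ this
    have hxd : a1 = d.xmin ∨ a1 = d.xmax := by
      rcases max_choice c.xmin d.xmin with h | h
      · rcases min_choice c.xmax d.xmax with h' | h'
        · exfalso
          have e1 : a1 = c.xmin := by rw [ha1d, h]
          have e2 : a1 = c.xmax := by rw [hdeg, hb1d, h']
          have := c.hx; rw [← e1, ← e2] at this; exact lt_irrefl _ this
        · exact Or.inr (by rw [hdeg, hb1d, h'])
      · exact Or.inl (by rw [ha1d, h])
    have hqa_c : ((p.1, a2) : ℝ × ℝ) ∈ c.toSet := by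
      rw [rect_mem_toSet]
      exact ⟨⟨hpc'.1.1, hpc'.1.2⟩, le_max_left _ _, by linarith [min_le_left c.ymax d.ymax]⟩
    have hqa_d : ((p.1, a2) : ℝ × ℝ) ∈ d.toSet := by
      rw [rect_mem_toSet]
      exact ⟨⟨hpd'.1.1, hpd'.1.2⟩, le_max_right _ _, by linarith [min_le_right c.ymax d.ymax]⟩
    have hqb_c : ((p.1, b2) : ℝ × ℝ) ∈ c.toSet := by
      rw [rect_mem_toSet]
      exact ⟨⟨hpc'.1.1, hpc'.1.2⟩, by linarith [le_max_left c.ymin d.ymin], min_le_left _ _⟩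
    have hqb_d : ((p.1, b2) : ℝ × ℝ) ∈ d.toSet := by
      rw [rect_mem_toSet]
      exact ⟨⟨hpd'.1.1, hpd'.1.2⟩, by linarith [le_max_right c.ymin d.ymin], min_le_right _ _⟩
    have hva : IsVertexOf T ((p.1, a2) : ℝ × ℝ) := by
      rcases max_choice c.ymin d.ymin with h | h
      · exact corner_vertex hc (hx0 ▸ hxc) (Or.inl (by rw [ha2d, h]))
      · exact corner_vertex hd (hx0 ▸ hxd) (Or.inl (by rw [ha2d, h]))
    have hvb : IsVertexOf T ((p.1, b2) : ℝ × ℝ) := by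
      rcases min_choice c.ymax d.ymax with h | h
      · exact corner_vertex hc (hx0 ▸ hxc) (Or.inr (by rw [hb2d, h]))
      · exact corner_vertex hd (hx0 ▸ hxd) (Or.inr (by rw [hb2d, h]))
    have hia := (interp_vertex hg hc hva hqa_c).trans (interp_vertex hg hd hva hqa_d).symm
    have hib := (interp_vertex hg hc hvb hqb_c).trans (interp_vertex hg hd hvb hqb_d).symm
    by_cases hab : a2 = b2
    · have hp2 : p.2 = a2 := le_antisymm (hab ▸ hb2) ha2
      have hpp : p = ((p.1, a2) : ℝ × ℝ) := Prod.ext rfl hp2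
      rw [hpp]
      exact hia
    · have hab' : a2 < b2 := lt_of_le_of_ne (ha2.trans hb2) hab
      have hne : b2 - a2 ≠ 0 := sub_ne_zero.2 hab'.ne'
      set μ := (b2 - p.2) / (b2 - a2) with hμd
      have hμ : p.2 = μ * a2 + (1 - μ) * b2 := by
        rw [hμd]; field_simp; ring
      have hpp : p = ((p.1, μ * a2 + (1 - μ) * b2) : ℝ × ℝ) := Prod.ext rfl hμ
      rw [hpp, interp_affine_y, interp_affine_y, hia, hib]
  · -- the intersection is contained in a horizontal line
    have hy0 : p.2 = a2 := le_antisymm (hdeg ▸ hb2) ha2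
    have hyc : a2 = c.ymin ∨ a2 = c.ymax := by
      rcases max_choice c.ymin d.ymin with h | h
      · exact Or.inl (by rw [ha2d, h])
      · rcases min_choice c.ymax d.ymax with h' | h'
        · exact Or.inr (by rw [hdeg, hb2d, h'])
        · exfalso
          have e1 : a2 = d.ymin := by rw [ha2d, h]
          have e2 : a2 = d.ymax := by rw [hdeg, hb2d, h']
          have := d.hy; rw [← e1, ← e2] at this; exact lt_irrefl _ this
    have hyd : a2 = d.ymin ∨ a2 = d.ymax := by
      rcases max_choice c.ymin d.ymin with h | h
      · rcases min_choice c.ymax d.ymax with h' | h'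
        · exfalso
          have e1 : a2 = c.ymin := by rw [ha2d, h]
          have e2 : a2 = c.ymax := by rw [hdeg, hb2d, h']
          have := c.hy; rw [← e1, ← e2] at this; exact lt_irrefl _ this
        · exact Or.inr (by rw [hdeg, hb2d, h'])
      · exact Or.inl (by rw [ha2d, h])
    have hqa_c : ((a1, p.2) : ℝ × ℝ) ∈ c.toSet := by
      rw [rect_mem_toSet]
      exact ⟨⟨le_max_left _ _, by linarith [min_le_left c.xmax d.xmax]⟩, hpc'.2.1, hpc'.2.2⟩
    have hqa_d : ((a1, p.2) : ℝ × ℝ) ∈ d.toSet := by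
      rw [rect_mem_toSet]
      exact ⟨⟨le_max_right _ _, by linarith [min_le_right c.xmax d.xmax]⟩, hpd'.2.1, hpd'.2.2⟩
    have hqb_c : ((b1, p.2) : ℝ × ℝ) ∈ c.toSet := by
      rw [rect_mem_toSet]
      exact ⟨⟨by linarith [le_max_left c.xmin d.xmin], min_le_left _ _⟩, hpc'.2.1, hpc'.2.2⟩
    have hqb_d : ((b1, p.2) : ℝ × ℝ) ∈ d.toSet := by
      rw [rect_mem_toSet]
      exact ⟨⟨by linarith [le_max_right c.xmin d.xmin], min_le_right _ _⟩, hpd'.2.1, hpd'.2.2⟩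
    have hva : IsVertexOf T ((a1, p.2) : ℝ × ℝ) := by
      rcases max_choice c.xmin d.xmin with h | h
      · exact corner_vertex hc (Or.inl (by rw [ha1d, h])) (hy0 ▸ hyc)
      · exact corner_vertex hd (Or.inl (by rw [ha1d, h])) (hy0 ▸ hyd)
    have hvb : IsVertexOf T ((b1, p.2) : ℝ × ℝ) := by
      rcases min_choice c.xmax d.xmax with h | h
      · exact corner_vertex hc (Or.inr (by rw [hb1d, h])) (hy0 ▸ hyc)
      · exact corner_vertex hd (Or.inr (by rw [hb1d, h])) (hy0 ▸ hyd)
    have hia := (interp_vertex hg hc hva hqa_c).trans (interp_vertex hg hd hva hqa_d).symm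
    have hib := (interp_vertex hg hc hvb hqb_c).trans (interp_vertex hg hd hvb hqb_d).symm
    by_cases hab : a1 = b1
    · have hp1 : p.1 = a1 := le_antisymm (hab ▸ hb1) ha1
      have hpp : p = ((a1, p.2) : ℝ × ℝ) := Prod.ext hp1 rfl
      rw [hpp]
      exact hia
    · have hab' : a1 < b1 := lt_of_le_of_ne (ha1.trans hb1) hab
      have hne : b1 - a1 ≠ 0 := sub_ne_zero.2 hab'.ne'
      set μ := (b1 - p.1) / (b1 - a1) with hμd
      have hμ : p.1 = μ * a1 + (1 - μ) * b1 := by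
        rw [hμd]; field_simp; ring
      have hpp : p = ((μ * a1 + (1 - μ) * b1, p.2) : ℝ × ℝ) := Prod.ext hμ rfl
      rw [hpp, interp_affine_x, interp_affine_x, hia, hib]

open Classical in
/-- The pasted piecewise-bilinear function. -/
noncomputable def paste (T : TMesh) (g : ℝ × ℝ → ℝ) : ℝ × ℝ → ℝ :=
  fun p => if h : ∃ c ∈ T.cells, p ∈ c.toSet then interp h.choose g p else 0

lemma paste_eq_interp (hg : GoodVals T g) {c : Rect} (hc : c ∈ T.cells) {p : ℝ × ℝ}
    (hp : p ∈ c.toSet) : paste T g p = interp c g p := by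
  have h : ∃ c ∈ T.cells, p ∈ c.toSet := ⟨c, hc, hp⟩
  rw [paste, dif_pos h]
  exact interp_agree hg h.choose_spec.1 hc h.choose_spec.2 hp

lemma paste_eq_zero {p : ℝ × ℝ} (hp : p ∉ T.Omega) : paste T g p = 0 := by
  rw [paste, dif_neg]
  rintro ⟨c, hc, hpc⟩
  exact hp (cell_subset_Omega hc hpc)

lemma paste_vertex (hg : GoodVals T g) {w : ℝ × ℝ} (hw : IsVertexOf T w) :
    paste T g w = g w := by
  obtain ⟨e, he, h1, h2⟩ := hw
  have hmem := vertex_mem_cell h1 h2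
  rw [paste_eq_interp hg he hmem]
  exact interp_vertex hg he ⟨e, he, h1, h2⟩ hmem

lemma paste_frontier_zero (hg : GoodVals T g) {p : ℝ × ℝ} (hp : p ∈ frontier T.Omega) :
    paste T g p = 0 := by
  have hpΩ : p ∈ T.Omega := (mem_frontier_Omega.1 hp).1
  obtain ⟨c, hc, hpc⟩ := exists_cell_of_mem_Omega hpΩ
  rw [paste_eq_interp hg hc hpc]
  have hb := cell_bounds hc
  rw [rect_mem_toSet] at hpc
  rcases (mem_frontier_Omega.1 hp).2 with hs | hs | hs | hs
  · have hxl : c.xmin = T.outer.xmin := le_antisymm (hs ▸ hpc.1.1) hb.1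
    have hpp : p = ((c.xmin, p.2) : ℝ × ℝ) := Prod.ext (by rw [hs, hxl]) rfl
    rw [hpp]; exact interp_zero_left hg hc hxl p.2
  · have hxr : c.xmax = T.outer.xmax := le_antisymm hb.2.1 (hs ▸ hpc.1.2)
    have hpp : p = ((c.xmax, p.2) : ℝ × ℝ) := Prod.ext (by rw [hs, hxr]) rfl
    rw [hpp]; exact interp_zero_right hg hc hxr p.2
  · have hyb : c.ymin = T.outer.ymin := le_antisymm (hs ▸ hpc.2.1) hb.2.2.1
    have hpp : p = ((p.1, c.ymin) : ℝ × ℝ) := Prod.ext rfl (by rw [hs, hyb])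
    rw [hpp]; exact interp_zero_bot hg hc hyb p.1
  · have hyt : c.ymax = T.outer.ymax := le_antisymm hb.2.2.2 (hs ▸ hpc.2.2)
    have hpp : p = ((p.1, c.ymax) : ℝ × ℝ) := Prod.ext rfl (by rw [hs, hyt])
    rw [hpp]; exact interp_zero_top hg hc hyt p.1

lemma continuous_of_closed_cover {ι X Y : Type*} [Finite ι] [TopologicalSpace X]
    [TopologicalSpace Y] {f : X → Y} {A : ι → Set X} (hA : ∀ i, IsClosed (A i))
    (hcov : ∀ x, ∃ i, x ∈ A i) (hf : ∀ i, ContinuousOn f (A i)) : Continuous f := by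
  rw [continuous_iff_isClosed]
  intro t ht
  have heq : f ⁻¹' t = ⋃ i, (f ⁻¹' t ∩ A i) := by
    ext x
    simp only [Set.mem_iUnion, Set.mem_inter_iff, Set.mem_preimage]
    constructor
    · intro hx
      obtain ⟨i, hi⟩ := hcov x
      exact ⟨i, hx, hi⟩
    · rintro ⟨i, hx, -⟩
      exact hx
  rw [heq]
  refine isClosed_iUnion_of_finite fun i => ?_
  obtain ⟨u, hu, hueq⟩ := continuousOn_iff_isClosed.1 (hf i) t ht
  rw [hueq]
  exact hu.inter (hA i)

lemma paste_continuous (hg : GoodVals T g) : Continuous (paste T g) := by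
  haveI := T.finite_cells.fintype
  refine continuous_of_closed_cover (ι := Option T.cells)
    (A := fun i => Option.elim i (interior T.Omega)ᶜ fun c => (c : Rect).toSet) ?_ ?_ ?_
  · rintro (_ | c)
    · exact isOpen_interior.isClosed_compl
    · exact rect_isClosed _
  · intro x
    by_cases hx : x ∈ interior T.Omega
    · obtain ⟨c, hc, hxc⟩ := exists_cell_of_mem_Omega (interior_subset hx)
      exact ⟨some ⟨c, hc⟩, hxc⟩
    · exact ⟨none, hx⟩
  · rintro (_ | c)
    · refine (continuousOn_const (c := (0 : ℝ))).congr fun p hp => ?_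
      simp only [Option.elim, Set.mem_compl_iff] at hp
      by_cases hpΩ : p ∈ T.Omega
      · refine paste_frontier_zero hg ?_
        rw [TMesh.Omega, rect_frontier]
        exact ⟨hpΩ, hp⟩
      · exact paste_eq_zero hpΩ
    · exact interp_continuous.continuousOn.congr fun p hp => paste_eq_interp hg c.2 hp

lemma smoothWithin_univ_iff (f : ℝ × ℝ → ℝ) :
    SmoothWithin Set.univ 0 0 f ↔ Continuous f := by
  constructor
  · intro h
    have h0 := h.1 0 0 le_rfl le_rfl
    simp only [mpW, Function.iterate_zero, id] at h0
    exact continuousOn_univ.1 h0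
  · intro h
    refine ⟨fun i j hi hj => ?_, fun i hi => ?_, fun i j hi hj => ?_⟩
    · have hi0 : i = 0 := by exact_mod_cast le_antisymm hi (by positivity)
      have hj0 : j = 0 := by exact_mod_cast le_antisymm hj (by positivity)
      subst hi0; subst hj0
      simp only [mpW, Function.iterate_zero, id]
      exact h.continuousOn
    · exact absurd hi (by simp)
    · exact absurd hj (by simp)

lemma paste_mem_SBar (hg : GoodVals T g) : paste T g ∈ SBar 1 1 0 0 T := by
  refine ⟨fun p hp => paste_eq_zero hp, ?_, (smoothWithin_univ_iff _).2 (paste_continuous hg)⟩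
  intro c hc
  obtain ⟨p, h0, h1, hev⟩ := interp_poly (c := c) (g := g)
  exact ⟨p, h0, h1, fun q hq => by rw [paste_eq_interp hg hc hq]; exact hev q⟩

end TMeshAux

namespace TMeshAux

open Finset

variable (T : TMesh)

def Vset : Set (ℝ × ℝ) := {p | IsVertexOf T p}
def Kset : Set (ℝ × ℝ) := {p | IsCrossingVertex T p}

lemma Vset_finite : (Vset T).Finite := by
  have hsub : Vset T ⊆ ⋃ c ∈ T.cells,
      (({c.xmin, c.xmax} : Set ℝ) ×ˢ ({c.ymin, c.ymax} : Set ℝ)) := by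
    rintro p ⟨c, hc, h1, h2⟩
    exact Set.mem_biUnion hc ⟨by simpa using h1, by simpa using h2⟩
  exact (T.finite_cells.biUnion fun c _ =>
    (((Set.finite_singleton _).insert _).prod ((Set.finite_singleton _).insert _))).subset hsub

lemma Kset_sub : Kset T ⊆ Vset T := fun p hp => hp.1

lemma Kset_finite : (Kset T).Finite := (Vset_finite T).subset (Kset_sub T)

noncomputable def VF : Finset (ℝ × ℝ) := (Vset_finite T).toFinset
noncomputable def KF : Finset (ℝ × ℝ) := (Kset_finite T).toFinset

variable {T}

lemma mem_VF_iff {p : ℝ × ℝ} : p ∈ VF T ↔ IsVertexOf T p := by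
  rw [VF, Set.Finite.mem_toFinset]; rfl

lemma mem_KF_iff {p : ℝ × ℝ} : p ∈ KF T ↔ IsCrossingVertex T p := by
  rw [KF, Set.Finite.mem_toFinset]; rfl

lemma KF_sub_VF : KF T ⊆ VF T := fun p hp => mem_VF_iff.2 (mem_KF_iff.1 hp).1

lemma DF_vertex (v : ↥(VF T \ KF T)) : IsVertexOf T (v : ℝ × ℝ) :=
  mem_VF_iff.1 (Finset.mem_sdiff.1 v.2).1

lemma DF_not_crossing (v : ↥(VF T \ KF T)) : ¬ IsCrossingVertex T (v : ℝ × ℝ) :=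
  fun h => (Finset.mem_sdiff.1 v.2).2 (mem_KF_iff.2 h)

lemma DF_interior (v : ↥(VF T \ KF T)) (hfr : (v : ℝ × ℝ) ∉ frontier T.Omega) :
    (v : ℝ × ℝ) ∈ interior T.Omega :=
  (vertex_interior_or_frontier (DF_vertex v)).resolve_right hfr

noncomputable def chCell2 (v : ↥(VF T \ KF T)) (hfr : (v : ℝ × ℝ) ∉ frontier T.Omega) : Rect :=
  (exists_openEdge (DF_vertex v) (DF_interior v hfr) (DF_not_crossing v)).choose

lemma chCell2_mem (v : ↥(VF T \ KF T)) (hfr : (v : ℝ × ℝ) ∉ frontier T.Omega) :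
    chCell2 v hfr ∈ T.cells :=
  (exists_openEdge (DF_vertex v) (DF_interior v hfr) (DF_not_crossing v)).choose_spec.1

lemma chCell2_edge (v : ↥(VF T \ KF T)) (hfr : (v : ℝ × ℝ) ∉ frontier T.Omega) :
    OpenEdgeV (v : ℝ × ℝ) (chCell2 v hfr) ∨ OpenEdgeH (v : ℝ × ℝ) (chCell2 v hfr) :=
  (exists_openEdge (DF_vertex v) (DF_interior v hfr) (DF_not_crossing v)).choose_spec.2

open Classical in
noncomputable def evalV (T : TMesh) (x : ↥(VF T) → ℝ) (p : ℝ × ℝ) : ℝ :=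
  if h : p ∈ VF T then x ⟨p, h⟩ else 0

lemma evalV_mem {x : ↥(VF T) → ℝ} {p : ℝ × ℝ} (h : p ∈ VF T) : evalV T x p = x ⟨p, h⟩ := by
  rw [evalV, dif_pos h]

lemma evalV_add (x y : ↥(VF T) → ℝ) (p : ℝ × ℝ) :
    evalV T (x + y) p = evalV T x p + evalV T y p := by
  rw [evalV, evalV, evalV]; split <;> simp

lemma evalV_smul (r : ℝ) (x : ↥(VF T) → ℝ) (p : ℝ × ℝ) :
    evalV T (r • x) p = r * evalV T x p := by
  rw [evalV, evalV]; split <;> simp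

open Classical in
noncomputable def comboV (T : TMesh) (x : ↥(VF T) → ℝ) (v : ℝ × ℝ) (c : Rect) : ℝ :=
  if c.ymin < v.2 ∧ v.2 < c.ymax then
    ((c.ymax - v.2) * evalV T x (v.1, c.ymin) + (v.2 - c.ymin) * evalV T x (v.1, c.ymax)) /
      (c.ymax - c.ymin)
  else
    ((c.xmax - v.1) * evalV T x (c.xmin, v.2) + (v.1 - c.xmin) * evalV T x (c.xmax, v.2)) /
      (c.xmax - c.xmin)

lemma comboV_add (x y : ↥(VF T) → ℝ) (v : ℝ × ℝ) (c : Rect) :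
    comboV T (x + y) v c = comboV T x v c + comboV T y v c := by
  rw [comboV, comboV, comboV]
  split <;> rw [evalV_add, evalV_add] <;> ring

lemma comboV_smul (r : ℝ) (x : ↥(VF T) → ℝ) (v : ℝ × ℝ) (c : Rect) :
    comboV T (r • x) v c = r * comboV T x v c := by
  rw [comboV, comboV]
  split <;> rw [evalV_smul, evalV_smul] <;> ring

open Classical in
noncomputable def PhiFun (T : TMesh) (x : ↥(VF T) → ℝ) (v : ↥(VF T \ KF T)) : ℝ :=
  if hfr : (v : ℝ × ℝ) ∈ frontier T.Omega then evalV T x v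
  else evalV T x v - comboV T x v (chCell2 v hfr)

noncomputable def Phi (T : TMesh) : (↥(VF T) → ℝ) →ₗ[ℝ] (↥(VF T \ KF T) → ℝ) where
  toFun := PhiFun T
  map_add' x y := by
    funext v
    by_cases hfr : (v : ℝ × ℝ) ∈ frontier T.Omega
    · simp only [PhiFun, dif_pos hfr, Pi.add_apply, evalV_add]
    · simp only [PhiFun, dif_neg hfr, Pi.add_apply, evalV_add, comboV_add]; ring
  map_smul' r x := by
    funext v
    by_cases hfr : (v : ℝ × ℝ) ∈ frontier T.Omega
    · simp only [PhiFun, dif_pos hfr, Pi.smul_apply, RingHom.id_apply, smul_eq_mul, evalV_smul]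
    · simp only [PhiFun, dif_neg hfr, Pi.smul_apply, RingHom.id_apply, smul_eq_mul,
        evalV_smul, comboV_smul]
      ring

lemma phi_zero_goodvals {x : ↥(VF T) → ℝ} (hx : Phi T x = 0) : GoodVals T (evalV T x) := by
  constructor
  · intro v hv hfr
    have hnc : ¬ IsCrossingVertex T v := not_crossing_of_frontier hfr
    have hvD : v ∈ VF T \ KF T :=
      Finset.mem_sdiff.2 ⟨mem_VF_iff.2 hv, fun h => hnc (mem_KF_iff.1 h)⟩
    have heq := congrFun hx ⟨v, hvD⟩
    simp only [Phi, LinearMap.coe_mk, AddHom.coe_mk, PhiFun, dif_pos hfr, Pi.zero_apply] at heq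
    exact heq
  · intro v hv hint c hc
    have hfr : v ∉ frontier T.Omega := by
      intro h
      rw [TMesh.Omega, rect_frontier] at h
      exact h.2 hint
    constructor
    · intro hoe
      have hnc := openEdge_not_crossing hc (Or.inl hoe)
      have hvD : v ∈ VF T \ KF T :=
        Finset.mem_sdiff.2 ⟨mem_VF_iff.2 hv, fun h => hnc (mem_KF_iff.1 h)⟩
      have heq := congrFun hx ⟨v, hvD⟩
      simp only [Phi, LinearMap.coe_mk, AddHom.coe_mk, PhiFun, dif_neg hfr,
        Pi.zero_apply] at heq
      have hcell : chCell2 ⟨v, hvD⟩ hfr = c :=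
        edge_unique (chCell2_mem ⟨v, hvD⟩ hfr) hc hv (chCell2_edge ⟨v, hvD⟩ hfr) (Or.inl hoe)
      rw [hcell, comboV, if_pos ⟨hoe.2.1, hoe.2.2⟩] at heq
      have := sub_eq_zero.1 heq
      exact this
    · intro hoe
      have hnc := openEdge_not_crossing hc (Or.inr hoe)
      have hvD : v ∈ VF T \ KF T :=
        Finset.mem_sdiff.2 ⟨mem_VF_iff.2 hv, fun h => hnc (mem_KF_iff.1 h)⟩
      have heq := congrFun hx ⟨v, hvD⟩
      simp only [Phi, LinearMap.coe_mk, AddHom.coe_mk, PhiFun, dif_neg hfr,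
        Pi.zero_apply] at heq
      have hcell : chCell2 ⟨v, hvD⟩ hfr = c :=
        edge_unique (chCell2_mem ⟨v, hvD⟩ hfr) hc hv (chCell2_edge ⟨v, hvD⟩ hfr) (Or.inr hoe)
      have hcond : ¬ (c.ymin < v.2 ∧ v.2 < c.ymax) := by
        rcases hoe.1 with h | h <;> rw [h] <;> intro hcon
        · exact lt_irrefl _ hcon.1
        · exact lt_irrefl _ hcon.2
      rw [hcell, comboV, if_neg hcond] at heq
      exact sub_eq_zero.1 heq

/-- Discrete maximum-principle injectivity. -/
lemma phi_ker_nonpos {x : ↥(VF T) → ℝ} (hx : Phi T x = 0)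
    (hK : ∀ v : ↥(VF T), IsCrossingVertex T (v : ℝ × ℝ) → x v = 0) :
    ∀ v, x v ≤ 0 := by
  by_contra hcon
  push_neg at hcon
  obtain ⟨v0, hv0⟩ := hcon
  haveI : Nonempty ↥(VF T) := ⟨v0⟩
  set M := Finset.univ.sup' Finset.univ_nonempty x with hMdef
  have hM : 0 < M := lt_of_lt_of_le hv0 (Finset.le_sup' x (Finset.mem_univ v0))
  have hle : ∀ w : ↥(VF T), x w ≤ M := fun w => Finset.le_sup' x (Finset.mem_univ w)
  set A : Finset ↥(VF T) := Finset.univ.filter (fun v => x v = M) with hA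
  have hAne : A.Nonempty := by
    obtain ⟨i, -, hi⟩ := Finset.exists_mem_eq_sup' Finset.univ_nonempty x
    exact ⟨i, Finset.mem_filter.2 ⟨Finset.mem_univ i, hi.symm⟩⟩
  obtain ⟨v, hvA, hvmax⟩ := Finset.exists_max_image A (fun v => toLex (v : ℝ × ℝ)) hAne
  have hxv : x v = M := (Finset.mem_filter.1 hvA).2
  have hnc : ¬ IsCrossingVertex T (v : ℝ × ℝ) := by
    intro h
    rw [hK v h] at hxv
    exact hM.ne hxv
  have hvD : (v : ℝ × ℝ) ∈ VF T \ KF T :=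
    Finset.mem_sdiff.2 ⟨v.2, fun h => hnc (mem_KF_iff.1 h)⟩
  have heq := congrFun hx ⟨(v : ℝ × ℝ), hvD⟩
  simp only [Phi, LinearMap.coe_mk, AddHom.coe_mk, PhiFun, Pi.zero_apply] at heq
  by_cases hfr : (v : ℝ × ℝ) ∈ frontier T.Omega
  · rw [dif_pos hfr, evalV_mem v.2] at heq
    have : x v = 0 := by
      convert heq using 2
    rw [this] at hxv
    exact hM.ne hxv
  · rw [dif_neg hfr] at heq
    set c := chCell2 ⟨(v : ℝ × ℝ), hvD⟩ hfr with hcdef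
    have hcmem : c ∈ T.cells := chCell2_mem _ hfr
    have hedge := chCell2_edge ⟨(v : ℝ × ℝ), hvD⟩ hfr
    have hvval : evalV T x (v : ℝ × ℝ) = M := by rw [evalV_mem v.2]; exact hxv
    rcases hedge with hoe | hoe
    · -- vertical open edge
      have hcond : c.ymin < (v : ℝ × ℝ).2 ∧ (v : ℝ × ℝ).2 < c.ymax := ⟨hoe.2.1, hoe.2.2⟩
      rw [comboV, if_pos hcond, hvval] at heq
      have hu1 : (((v : ℝ × ℝ).1, c.ymin) : ℝ × ℝ) ∈ VF T :=
        mem_VF_iff.2 (corner_vertex hcmem hoe.1 (Or.inl rfl))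
      have hu2 : (((v : ℝ × ℝ).1, c.ymax) : ℝ × ℝ) ∈ VF T :=
        mem_VF_iff.2 (corner_vertex hcmem hoe.1 (Or.inr rfl))
      rw [evalV_mem hu1, evalV_mem hu2] at heq
      set y1 := x ⟨(((v : ℝ × ℝ).1, c.ymin) : ℝ × ℝ), hu1⟩ with hy1def
      set y2 := x ⟨(((v : ℝ × ℝ).1, c.ymax) : ℝ × ℝ), hu2⟩ with hy2def
      have hy1M : y1 ≤ M := hle _
      have hy2M : y2 ≤ M := hle _
      have hDy : (0 : ℝ) < c.ymax - c.ymin := by linarith [c.hy]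
      have heq' : M * (c.ymax - c.ymin) =
          (c.ymax - (v : ℝ × ℝ).2) * y1 + ((v : ℝ × ℝ).2 - c.ymin) * y2 := by
        have := sub_eq_zero.1 heq
        field_simp at this
        linarith [this]
      have hy2 : y2 = M := by nlinarith [hcond.1, hcond.2]
      have hu2A : (⟨(((v : ℝ × ℝ).1, c.ymax) : ℝ × ℝ), hu2⟩ : ↥(VF T)) ∈ A :=
        Finset.mem_filter.2 ⟨Finset.mem_univ _, hy2⟩
      have hlex := hvmax _ hu2A
      rw [Prod.Lex.le_iff] at hlex
      simp only at hlex
      rcases hlex with h | ⟨h1, h2⟩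
      · exact absurd h (lt_irrefl _)
      · exact absurd h2 (not_le.2 hcond.2)
    · -- horizontal open edge
      have hcond : ¬ (c.ymin < (v : ℝ × ℝ).2 ∧ (v : ℝ × ℝ).2 < c.ymax) := by
        rcases hoe.1 with h | h <;> rw [h] <;> intro hcon
        · exact lt_irrefl _ hcon.1
        · exact lt_irrefl _ hcon.2
      rw [comboV, if_neg hcond, hvval] at heq
      have hu1 : ((c.xmin, (v : ℝ × ℝ).2) : ℝ × ℝ) ∈ VF T :=
        mem_VF_iff.2 (corner_vertex hcmem (Or.inl rfl) hoe.1)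
      have hu2 : ((c.xmax, (v : ℝ × ℝ).2) : ℝ × ℝ) ∈ VF T :=
        mem_VF_iff.2 (corner_vertex hcmem (Or.inr rfl) hoe.1)
      rw [evalV_mem hu1, evalV_mem hu2] at heq
      set y1 := x ⟨((c.xmin, (v : ℝ × ℝ).2) : ℝ × ℝ), hu1⟩ with hy1def
      set y2 := x ⟨((c.xmax, (v : ℝ × ℝ).2) : ℝ × ℝ), hu2⟩ with hy2def
      have hy1M : y1 ≤ M := hle _
      have hy2M : y2 ≤ M := hle _
      have hDx : (0 : ℝ) < c.xmax - c.xmin := by linarith [c.hx]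
      have hcond2 : c.xmin < (v : ℝ × ℝ).1 ∧ (v : ℝ × ℝ).1 < c.xmax := ⟨hoe.2.1, hoe.2.2⟩
      have heq' : M * (c.xmax - c.xmin) =
          (c.xmax - (v : ℝ × ℝ).1) * y1 + ((v : ℝ × ℝ).1 - c.xmin) * y2 := by
        have := sub_eq_zero.1 heq
        field_simp at this
        linarith [this]
      have hy2 : y2 = M := by nlinarith [hcond2.1, hcond2.2]
      have hu2A : (⟨((c.xmax, (v : ℝ × ℝ).2) : ℝ × ℝ), hu2⟩ : ↥(VF T)) ∈ A :=
        Finset.mem_filter.2 ⟨Finset.mem_univ _, hy2⟩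
      have hlex := hvmax _ hu2A
      rw [Prod.Lex.le_iff] at hlex
      simp only at hlex
      rcases hlex with h | ⟨h1, h2⟩
      · exact absurd h (not_lt.2 hcond2.2.le)
      · simp only [ofLex_toLex] at h1; rw [h1] at hcond2; exact absurd hcond2.2 (lt_irrefl _)

lemma phi_ker_zero {x : ↥(VF T) → ℝ} (hx : Phi T x = 0)
    (hK : ∀ v : ↥(VF T), IsCrossingVertex T (v : ℝ × ℝ) → x v = 0) : x = 0 := by
  have h1 := phi_ker_nonpos hx hK
  have h2 := phi_ker_nonpos (x := -x) (by rw [map_neg, hx, neg_zero])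
    (fun v hv => by rw [Pi.neg_apply, hK v hv, neg_zero])
  funext v
  have h3 := h2 v
  rw [Pi.neg_apply] at h3
  have h4 := h1 v
  simp only [Pi.zero_apply]
  linarith

end TMeshAux

namespace TMeshAux

variable {T : TMesh}

lemma sbar_continuous {f : ℝ × ℝ → ℝ} (hf : f ∈ SBar 1 1 0 0 T) : Continuous f :=
  (smoothWithin_univ_iff f).1 hf.2.2

lemma sbar_frontier_zero {f : ℝ × ℝ → ℝ} (hf : f ∈ SBar 1 1 0 0 T) {p : ℝ × ℝ}
    (hp : p ∈ frontier T.Omega) : f p = 0 := by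
  have hcl : p ∈ closure (T.Omegaᶜ) := by
    rw [frontier_eq_closure_inter_closure] at hp
    exact hp.2
  have heq : Set.EqOn f 0 (closure (T.Omegaᶜ)) :=
    Set.EqOn.closure (fun q hq => hf.1 q hq) (sbar_continuous hf) continuous_const
  exact heq hcl

lemma sbar_zero_mem : (0 : ℝ × ℝ → ℝ) ∈ SBar 1 1 0 0 T := by
  refine ⟨fun p _ => rfl, fun c _ => ⟨0, ?_, ?_, fun q _ => by simp⟩,
    (smoothWithin_univ_iff _).2 continuous_const⟩
  · simp [MvPolynomial.degreeOf_zero]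
  · simp [MvPolynomial.degreeOf_zero]

lemma sbar_add {f g : ℝ × ℝ → ℝ} (hf : f ∈ SBar 1 1 0 0 T) (hg : g ∈ SBar 1 1 0 0 T) :
    f + g ∈ SBar 1 1 0 0 T := by
  refine ⟨fun p hp => by simp [Pi.add_apply, hf.1 p hp, hg.1 p hp], fun c hc => ?_,
    (smoothWithin_univ_iff _).2 ((sbar_continuous hf).add (sbar_continuous hg))⟩
  obtain ⟨pf, hf0, hf1, hfe⟩ := hf.2.1 c hc
  obtain ⟨pg, hg0, hg1, hge⟩ := hg.2.1 c hc
  refine ⟨pf + pg, le_trans (MvPolynomial.degreeOf_add_le _ _ _) (max_le hf0 hg0),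
    le_trans (MvPolynomial.degreeOf_add_le _ _ _) (max_le hf1 hg1), fun q hq => ?_⟩
  simp [Pi.add_apply, hfe q hq, hge q hq]

lemma degreeOf_smul_le' (i : Fin 2) (r : ℝ) (p : MvPolynomial (Fin 2) ℝ) :
    (r • p).degreeOf i ≤ p.degreeOf i := by
  rw [MvPolynomial.degreeOf_eq_sup, MvPolynomial.degreeOf_eq_sup]
  exact Finset.sup_mono MvPolynomial.support_smul

lemma sbar_smul (r : ℝ) {f : ℝ × ℝ → ℝ} (hf : f ∈ SBar 1 1 0 0 T) :
    r • f ∈ SBar 1 1 0 0 T := by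
  refine ⟨fun p hp => by simp [Pi.smul_apply, hf.1 p hp], fun c hc => ?_,
    (smoothWithin_univ_iff _).2 ((sbar_continuous hf).const_smul r)⟩
  obtain ⟨pf, hf0, hf1, hfe⟩ := hf.2.1 c hc
  refine ⟨r • pf, le_trans (degreeOf_smul_le' _ _ _) hf0,
    le_trans (degreeOf_smul_le' _ _ _) hf1, fun q hq => ?_⟩
  rw [MvPolynomial.smul_eval, Pi.smul_apply, smul_eq_mul, hfe q hq]

lemma sbar_sub {f g : ℝ × ℝ → ℝ} (hf : f ∈ SBar 1 1 0 0 T) (hg : g ∈ SBar 1 1 0 0 T) :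
    f - g ∈ SBar 1 1 0 0 T := by
  have heq : f - g = f + (-1 : ℝ) • g := by
    funext q
    simp [sub_eq_add_neg]
  rw [heq]
  exact sbar_add hf (sbar_smul _ hg)

lemma sbar_sum {n : ℕ} (co : Fin n → ℝ) (b : Fin n → (ℝ × ℝ → ℝ))
    (hb : ∀ i, b i ∈ SBar 1 1 0 0 T) : (∑ i, co i • b i) ∈ SBar 1 1 0 0 T := by
  classical
  exact Finset.sum_induction _ (· ∈ SBar 1 1 0 0 T) (fun a b' ha hb' => sbar_add ha hb')
    sbar_zero_mem (fun i _ => sbar_smul _ (hb i))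

lemma sbar_vec_ker {f : ℝ × ℝ → ℝ} (hf : f ∈ SBar 1 1 0 0 T) :
    Phi T (fun v : ↥(VF T) => f (v : ℝ × ℝ)) = 0 := by
  funext v
  simp only [Phi, LinearMap.coe_mk, AddHom.coe_mk, PhiFun, Pi.zero_apply]
  have hvV : (v : ℝ × ℝ) ∈ VF T := (Finset.mem_sdiff.1 v.2).1
  by_cases hfr : (v : ℝ × ℝ) ∈ frontier T.Omega
  · rw [dif_pos hfr, evalV_mem hvV]
    exact sbar_frontier_zero hf hfr
  · rw [dif_neg hfr]
    set c := chCell2 v hfr with hcdef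
    have hcmem : c ∈ T.cells := chCell2_mem v hfr
    have hedge := chCell2_edge v hfr
    obtain ⟨q, h0, h1, hev⟩ := hf.2.1 c hcmem
    rw [sub_eq_zero]
    rcases hedge with hoe | hoe
    · have hcond : c.ymin < (v : ℝ × ℝ).2 ∧ (v : ℝ × ℝ).2 < c.ymax := ⟨hoe.2.1, hoe.2.2⟩
      rw [comboV, if_pos hcond]
      have hu1V : (((v : ℝ × ℝ).1, c.ymin) : ℝ × ℝ) ∈ VF T :=
        mem_VF_iff.2 (corner_vertex hcmem hoe.1 (Or.inl rfl))
      have hu2V : (((v : ℝ × ℝ).1, c.ymax) : ℝ × ℝ) ∈ VF T :=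
        mem_VF_iff.2 (corner_vertex hcmem hoe.1 (Or.inr rfl))
      rw [evalV_mem hvV, evalV_mem hu1V, evalV_mem hu2V]
      have hmv : (v : ℝ × ℝ) ∈ c.toSet := openEdgeV_mem hoe
      have hm1 : (((v : ℝ × ℝ).1, c.ymin) : ℝ × ℝ) ∈ c.toSet :=
        vertex_mem_cell (by simpa using hoe.1) (Or.inl rfl)
      have hm2 : (((v : ℝ × ℝ).1, c.ymax) : ℝ × ℝ) ∈ c.toSet :=
        vertex_mem_cell (by simpa using hoe.1) (Or.inr rfl)
      obtain ⟨A, B, hAB⟩ := eval_affine_snd h1 (v : ℝ × ℝ).1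
      have e0 : f (v : ℝ × ℝ) = A + B * (v : ℝ × ℝ).2 := by
        rw [hev _ hmv]; exact hAB _
      have e1 : f (((v : ℝ × ℝ).1, c.ymin) : ℝ × ℝ) = A + B * c.ymin := by
        rw [hev _ hm1]; exact hAB _
      have e2 : f (((v : ℝ × ℝ).1, c.ymax) : ℝ × ℝ) = A + B * c.ymax := by
        rw [hev _ hm2]; exact hAB _
      rw [e0, e1, e2, eq_div_iff (hDy c)]
      ring
    · have hcond : ¬ (c.ymin < (v : ℝ × ℝ).2 ∧ (v : ℝ × ℝ).2 < c.ymax) := by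
        rcases hoe.1 with h | h <;> rw [h] <;> intro hcon
        · exact lt_irrefl _ hcon.1
        · exact lt_irrefl _ hcon.2
      rw [comboV, if_neg hcond]
      have hu1V : ((c.xmin, (v : ℝ × ℝ).2) : ℝ × ℝ) ∈ VF T :=
        mem_VF_iff.2 (corner_vertex hcmem (Or.inl rfl) hoe.1)
      have hu2V : ((c.xmax, (v : ℝ × ℝ).2) : ℝ × ℝ) ∈ VF T :=
        mem_VF_iff.2 (corner_vertex hcmem (Or.inr rfl) hoe.1)
      rw [evalV_mem hvV, evalV_mem hu1V, evalV_mem hu2V]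
      have hmv : (v : ℝ × ℝ) ∈ c.toSet := openEdgeH_mem hoe
      have hm1 : ((c.xmin, (v : ℝ × ℝ).2) : ℝ × ℝ) ∈ c.toSet :=
        vertex_mem_cell (Or.inl rfl) (by simpa using hoe.1)
      have hm2 : ((c.xmax, (v : ℝ × ℝ).2) : ℝ × ℝ) ∈ c.toSet :=
        vertex_mem_cell (Or.inr rfl) (by simpa using hoe.1)
      obtain ⟨A, B, hAB⟩ := eval_affine_fst h0 (v : ℝ × ℝ).2
      have e0 : f (v : ℝ × ℝ) = A + B * (v : ℝ × ℝ).1 := by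
        rw [hev _ hmv]; exact hAB _
      have e1 : f ((c.xmin, (v : ℝ × ℝ).2) : ℝ × ℝ) = A + B * c.xmin := by
        rw [hev _ hm1]; exact hAB _
      have e2 : f ((c.xmax, (v : ℝ × ℝ).2) : ℝ × ℝ) = A + B * c.xmax := by
        rw [hev _ hm2]; exact hAB _
      rw [e0, e1, e2, eq_div_iff (hDx c)]
      ring

lemma sbar_eq_zero {f : ℝ × ℝ → ℝ} (hf : f ∈ SBar 1 1 0 0 T)
    (hK : ∀ v, IsCrossingVertex T v → f v = 0) : f = 0 := by
  have hker : Phi T (fun v : ↥(VF T) => f (v : ℝ × ℝ)) = 0 := sbar_vec_ker hf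
  have hx0 := phi_ker_zero hker (fun v hv => hK _ hv)
  have hvz : ∀ v, IsVertexOf T v → f v = 0 := by
    intro v hv
    have := congrFun hx0 ⟨v, mem_VF_iff.2 hv⟩
    simpa using this
  funext p
  show f p = 0
  by_cases hp : p ∈ T.Omega
  · obtain ⟨c, hc, hpc⟩ := exists_cell_of_mem_Omega hp
    obtain ⟨q, h0, h1, hev⟩ := hf.2.1 c hc
    have hcz : ∀ a b : ℝ, (a = c.xmin ∨ a = c.xmax) → (b = c.ymin ∨ b = c.ymax) →
        MvPolynomial.eval ![a, b] q = 0 := by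
      intro a b ha hb
      have hmem := vertex_mem_cell (c := c) (p := ((a, b) : ℝ × ℝ))
        (by simpa using ha) (by simpa using hb)
      have heq : MvPolynomial.eval ![a, b] q = f ((a, b) : ℝ × ℝ) := (hev _ hmem).symm
      rw [heq]
      exact hvz _ (corner_vertex hc ha hb)
    have hbot : ∀ x' : ℝ, MvPolynomial.eval ![x', c.ymin] q = 0 := by
      obtain ⟨A, B, hAB⟩ := eval_affine_fst h0 c.ymin
      intro x'
      rw [hAB]
      exact affine_zero c.hx.ne (by rw [← hAB]; exact hcz _ _ (Or.inl rfl) (Or.inl rfl))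
        (by rw [← hAB]; exact hcz _ _ (Or.inr rfl) (Or.inl rfl)) x'
    have htop : ∀ x' : ℝ, MvPolynomial.eval ![x', c.ymax] q = 0 := by
      obtain ⟨A, B, hAB⟩ := eval_affine_fst h0 c.ymax
      intro x'
      rw [hAB]
      exact affine_zero c.hx.ne (by rw [← hAB]; exact hcz _ _ (Or.inl rfl) (Or.inr rfl))
        (by rw [← hAB]; exact hcz _ _ (Or.inr rfl) (Or.inr rfl)) x'
    obtain ⟨A, B, hAB⟩ := eval_affine_snd h1 p.1
    have hz : MvPolynomial.eval ![p.1, p.2] q = 0 := by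
      rw [hAB]
      exact affine_zero c.hy.ne (by rw [← hAB]; exact hbot p.1)
        (by rw [← hAB]; exact htop p.1) p.2
    rw [hev p hpc]
    exact hz
  · exact hf.1 p hp

end TMeshAux

open TMeshAux

/-- **Theorem 3.4.** `dim S̄(1,1,0,0,T) = V⁺`, the number of crossing vertices of `T`. -/
theorem dim_SBar1100 (T : TMesh) : HasDim (SBar 1 1 0 0 T) (crossingCount T) := by
  classical
  set L := LinearMap.ker (Phi T) with hLdef
  have hfinW : Module.finrank ℝ (↥(VF T) → ℝ) = (VF T).card := by
    rw [Module.finrank_fintype_fun_eq_card, Fintype.card_coe]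
  have hfinD : Module.finrank ℝ (↥(VF T \ KF T) → ℝ) = (VF T \ KF T).card := by
    rw [Module.finrank_fintype_fun_eq_card, Fintype.card_coe]
  have hfinK : Module.finrank ℝ (↥(KF T) → ℝ) = (KF T).card := by
    rw [Module.finrank_fintype_fun_eq_card, Fintype.card_coe]
  have hrn := LinearMap.finrank_range_add_finrank_ker (Phi T)
  rw [hfinW, ← hLdef] at hrn
  have hrle : Module.finrank ℝ (LinearMap.range (Phi T)) ≤ (VF T \ KF T).card :=
    hfinD ▸ Submodule.finrank_le _
  have hcards : (VF T \ KF T).card = (VF T).card - (KF T).card := Finset.card_sdiff_of_subset KF_sub_VF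
  have hKle : (KF T).card ≤ (VF T).card := Finset.card_le_card KF_sub_VF
  have hLge : (KF T).card ≤ Module.finrank ℝ L := by omega
  set π : L →ₗ[ℝ] (↥(KF T) → ℝ) :=
    { toFun := fun x k => (x : ↥(VF T) → ℝ) ⟨(k : ℝ × ℝ), KF_sub_VF k.2⟩,
      map_add' := fun x y => rfl,
      map_smul' := fun r x => rfl } with hπdef
  have hinj : Function.Injective π := by
    rw [← LinearMap.ker_eq_bot, Submodule.eq_bot_iff]
    intro x hx
    have hx0 : Phi T (x : ↥(VF T) → ℝ) = 0 := LinearMap.mem_ker.1 x.2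
    have hcross : ∀ v : ↥(VF T), IsCrossingVertex T (v : ℝ × ℝ) → (x : ↥(VF T) → ℝ) v = 0 := by
      intro v hv
      have hk : (v : ℝ × ℝ) ∈ KF T := mem_KF_iff.2 hv
      have heq := congrFun (LinearMap.mem_ker.1 hx) ⟨(v : ℝ × ℝ), hk⟩
      exact heq
    exact Subtype.ext (phi_ker_zero hx0 hcross)
  have hLle : Module.finrank ℝ L ≤ (KF T).card :=
    hfinK ▸ LinearMap.finrank_le_finrank_of_injective hinj
  have hLeq : Module.finrank ℝ L = (KF T).card := le_antisymm hLle hLge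
  have hsurj : Function.Surjective π := by
    rw [← LinearMap.range_eq_top]
    apply Submodule.eq_top_of_finrank_eq
    have h0 : LinearMap.ker π = ⊥ := LinearMap.ker_eq_bot.2 hinj
    have hrk := LinearMap.finrank_range_add_finrank_ker π
    rw [h0, finrank_bot, add_zero] at hrk
    rw [hrk, hLeq, hfinK]
  have hcount : crossingCount T = (KF T).card := by
    rw [crossingCount]
    exact Set.ncard_eq_toFinset_card _ (Kset_finite T)
  have hcardK : Fintype.card ↥(KF T) = crossingCount T := by rw [Fintype.card_coe, hcount]
  set e : Fin (crossingCount T) ≃ ↥(KF T) := (Fintype.equivFinOfCardEq hcardK).symm with hedef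
  choose xk hxk using fun k : ↥(KF T) => hsurj (Pi.single k 1)
  set y : ↥(KF T) → (↥(VF T) → ℝ) := fun k => ((xk k : L) : ↥(VF T) → ℝ) with hydef
  have hyker : ∀ k, Phi T (y k) = 0 := fun k => LinearMap.mem_ker.1 (xk k).2
  have hgv : ∀ k, GoodVals T (evalV T (y k)) := fun k => phi_zero_goodvals (hyker k)
  set b : Fin (crossingCount T) → (ℝ × ℝ → ℝ) := fun i => paste T (evalV T (y (e i))) with hbdef
  have hbS : ∀ i, b i ∈ SBar 1 1 0 0 T := fun i => paste_mem_SBar (hgv (e i))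
  have hbval : ∀ (i : Fin (crossingCount T)) (k : ↥(KF T)),
      b i (k : ℝ × ℝ) = if k = e i then (1 : ℝ) else 0 := by
    intro i k
    have hkv : IsVertexOf T (k : ℝ × ℝ) := (mem_KF_iff.1 k.2).1
    have hkV : (k : ℝ × ℝ) ∈ VF T := mem_VF_iff.2 hkv
    show paste T (evalV T (y (e i))) (k : ℝ × ℝ) = _
    rw [paste_vertex (hgv (e i)) hkv, evalV_mem hkV]
    have heq := congrFun (hxk (e i)) k
    rw [Pi.single_apply] at heq
    exact heq
  refine ⟨b, hbS, ?_, ?_⟩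
  · rw [Fintype.linearIndependent_iff]
    intro co hco i
    have heval := congrFun hco ((e i : ↥(KF T)) : ℝ × ℝ)
    rw [Finset.sum_apply] at heval
    simp only [Pi.smul_apply, smul_eq_mul, Pi.zero_apply] at heval
    have hterm : ∀ j, co j * b j ((e i : ↥(KF T)) : ℝ × ℝ) = if i = j then co j else 0 := by
      intro j
      rw [hbval j (e i)]
      by_cases hij : i = j
      · subst hij; simp
      · have hne : ¬ ((e i : ↥(KF T)) = e j) := fun h => hij (e.injective h)
        simp [hij, hne]
    rw [Finset.sum_congr rfl (fun j _ => hterm j), Finset.sum_ite_eq] at heval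
    simpa using heval
  · intro f hf
    set co : Fin (crossingCount T) → ℝ := fun i => f ((e i : ↥(KF T)) : ℝ × ℝ) with hcodef
    refine ⟨co, ?_⟩
    have hmem : (f - ∑ i, co i • b i) ∈ SBar 1 1 0 0 T := sbar_sub hf (sbar_sum co b hbS)
    have hvanish : ∀ v, IsCrossingVertex T v → (f - ∑ i, co i • b i) v = 0 := by
      intro v hv
      have hk : v ∈ KF T := mem_KF_iff.2 hv
      rw [Pi.sub_apply, Finset.sum_apply]
      simp only [Pi.smul_apply, smul_eq_mul]
      have hterm : ∀ i, co i * b i v = if e.symm ⟨v, hk⟩ = i then co i else 0 := by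
        intro i
        have : b i v = b i ((⟨v, hk⟩ : ↥(KF T)) : ℝ × ℝ) := rfl
        rw [this, hbval i ⟨v, hk⟩]
        by_cases hik : e.symm ⟨v, hk⟩ = i
        · have : (⟨v, hk⟩ : ↥(KF T)) = e i := by rw [← hik, Equiv.apply_symm_apply]
          simp [hik, this]
        · have : ¬ ((⟨v, hk⟩ : ↥(KF T)) = e i) := by
            intro h
            exact hik (by rw [h, Equiv.symm_apply_apply])
          simp [hik, this]
      rw [Finset.sum_congr rfl (fun i _ => hterm i), Finset.sum_ite_eq]
      simp only [Finset.mem_univ, if_true]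
      rw [hcodef]
      simp only [Equiv.apply_symm_apply]
      exact sub_self _
    have hzero := sbar_eq_zero hmem hvanish
    exact sub_eq_zero.1 hzero
end
end

section
/- Let 𝒯 be a regular T-mesh. If f ∈ S̄(1,1,0,0,𝒯) vanishes at every crossing vertex of 𝒯, then f is identically zero. Consequently, the set of crossing vertices is a determining set for S̄(1,1,0,0,𝒯): the linear evaluation map sending f to its tuple of values at the crossing vertices is injective on S̄(1,1,0,0,𝒯). -/
open Filter Set MeasureTheory
open scoped Topology

noncomputable section

/-! ### Auxiliary lemmas for the proof -/

section AuxProof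

lemma step_arith {d wa wb u A B : ℝ} (hwa : 0 ≤ wa) (hwb : 0 ≤ wb) (hd : 0 < d)
    (hsum : wa + wb = d) (heq : d * u = wa * A + wb * B) : u ≤ A ∨ u ≤ B := by
  subst hsum
  by_contra hcon
  push_neg at hcon
  rcases hwa.lt_or_eq with h | h
  · nlinarith [mul_lt_mul_of_pos_left hcon.1 h, mul_le_mul_of_nonneg_left hcon.2.le hwb]
  · have hwbpos : 0 < wb := by linarith
    nlinarith [mul_lt_mul_of_pos_left hcon.2 hwbpos]

lemma strict_arith {d wa wb A B M : ℝ} (hwa : 0 < wa) (hwb : 0 < wb) (hsum : wa + wb = d)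
    (heq : d * M = wa * A + wb * B) (hA : A ≤ M) (hB : B ≤ M) : B = M := by
  subst hsum
  by_contra hne
  have hlt : B < M := lt_of_le_of_ne hB hne
  have h2 : wb * B < wb * M := mul_lt_mul_of_pos_left hlt hwb
  have h1 : 0 ≤ wa * (M - A) := mul_nonneg hwa.le (by linarith)
  nlinarith [h1, h2]

lemma seg_param {v d q : ℝ × ℝ} {ε : ℝ} (hε : 0 ≤ ε) (hq : q ∈ segment ℝ v (v + ε • d)) :
    ∃ t, 0 ≤ t ∧ t ≤ ε ∧ q = v + t • d := by
  rw [segment_eq_image'] at hq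
  obtain ⟨θ, ⟨h0, h1⟩, rfl⟩ := hq
  refine ⟨θ * ε, by positivity, by nlinarith, ?_⟩
  simp only [add_sub_cancel_left, smul_smul]

lemma seg_mono (v d : ℝ × ℝ) {ε ε' : ℝ} (h0 : 0 ≤ ε) (h : ε ≤ ε') :
    segment ℝ v (v + ε • d) ⊆ segment ℝ v (v + ε' • d) := by
  apply (convex_segment v (v + ε' • d)).segment_subset (left_mem_segment ℝ _ _)
  rcases eq_or_lt_of_le (h0.trans h) with h' | h'
  · have hε0 : ε = 0 := le_antisymm (h.trans h'.symm.le) h0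
    rw [hε0, ← h']
    simp only [zero_smul, add_zero]
    exact left_mem_segment ℝ _ _
  · rw [segment_eq_image']
    refine ⟨ε / ε', ⟨by positivity, by rw [div_le_one h']; exact h⟩, ?_⟩
    simp only [add_sub_cancel_left, smul_smul]
    rw [div_mul_cancel₀ _ (ne_of_gt h')]

lemma Rect.interior_toSet (c : Rect) :
    interior c.toSet = Set.Ioo c.xmin c.xmax ×ˢ Set.Ioo c.ymin c.ymax := by
  rw [Rect.toSet, interior_prod_eq, interior_Icc, interior_Icc]

lemma Rect.isClosed_toSet (c : Rect) : IsClosed c.toSet :=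
  isClosed_Icc.prod isClosed_Icc

lemma Rect.closure_interior (c : Rect) : closure (interior c.toSet) = c.toSet := by
  rw [Rect.interior_toSet, closure_prod_eq, closure_Ioo c.hx.ne, closure_Ioo c.hy.ne, Rect.toSet]

lemma vertex_mem_of_corner {d : Rect} {v : ℝ × ℝ}
    (hx : v.1 = d.xmin ∨ v.1 = d.xmax) (hy : v.2 = d.ymin ∨ v.2 = d.ymax) : v ∈ d.toSet := by
  constructor
  · rcases hx with h | h <;> rw [h]
    · exact ⟨le_rfl, d.hx.le⟩
    · exact ⟨d.hx.le, le_rfl⟩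
  · rcases hy with h | h <;> rw [h]
    · exact ⟨le_rfl, d.hy.le⟩
    · exact ⟨d.hy.le, le_rfl⟩

lemma vertex_not_mem_interior (T : TMesh) {v : ℝ × ℝ} (hv : IsVertexOf T v)
    {c : Rect} (hc : c ∈ T.cells) (hvc : v ∈ interior c.toSet) : False := by
  obtain ⟨d, hd, hx, hy⟩ := hv
  have hvd : v ∈ d.toSet := vertex_mem_of_corner hx hy
  by_cases hcd : c = d
  · subst hcd
    rw [Rect.interior_toSet] at hvc
    obtain ⟨h1, h2⟩ := hvc
    rcases hx with h | h
    · exact absurd h1.1 (by rw [h]; exact lt_irrefl _)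
    · exact absurd h1.2 (by rw [h]; exact lt_irrefl _)
  · have hdis := T.pairwise_disjoint hc hd hcd
    have hvcl : v ∈ closure (interior d.toSet) := by
      rw [Rect.closure_interior]; exact hvd
    obtain ⟨z, hz1, hz2⟩ := mem_closure_iff.1 hvcl (interior c.toSet) isOpen_interior hvc
    exact Set.disjoint_left.1 hdis hz1 hz2

lemma cell_subset_Omega (T : TMesh) {c : Rect} (hc : c ∈ T.cells) : c.toSet ⊆ T.Omega := by
  rw [TMesh.Omega, ← T.union_eq]
  exact Set.subset_biUnion_of_mem (u := fun c => c.toSet) hc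

lemma exists_cell (T : TMesh) {p : ℝ × ℝ} (hp : p ∈ T.Omega) : ∃ c ∈ T.cells, p ∈ c.toSet := by
  rw [TMesh.Omega, ← T.union_eq] at hp
  simpa using hp

lemma finite_vertices (T : TMesh) : {p | IsVertexOf T p}.Finite := by
  have : {p | IsVertexOf T p} ⊆
      ⋃ c ∈ T.cells, ({c.xmin, c.xmax} : Set ℝ) ×ˢ ({c.ymin, c.ymax} : Set ℝ) := by
    rintro p ⟨c, hc, hx, hy⟩
    exact Set.mem_biUnion hc ⟨by simpa using hx, by simpa using hy⟩
  exact Set.Finite.subset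
    (T.finite_cells.biUnion fun c _ =>
      (Set.toFinite _).prod (Set.toFinite _)) this

lemma frontier_subset_skeleton (T : TMesh) {c : Rect} (hc : c ∈ T.cells) :
    frontier c.toSet ⊆ T.skeleton := by
  rw [TMesh.skeleton]
  exact Set.subset_biUnion_of_mem (u := fun c => frontier c.toSet) hc

lemma interp_x (p : MvPolynomial (Fin 2) ℝ) (hp : p.degreeOf 0 ≤ 1) (x0 x1 x y : ℝ) :
    (x1 - x0) * MvPolynomial.eval ![x, y] p
      = (x1 - x) * MvPolynomial.eval ![x0, y] p + (x - x0) * MvPolynomial.eval ![x1, y] p := by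
  have hd : ∀ m ∈ p.support, m 0 < 2 := by
    rw [← MvPolynomial.degreeOf_lt_iff (by norm_num)]; omega
  rw [MvPolynomial.eval_eq', MvPolynomial.eval_eq', MvPolynomial.eval_eq', Finset.mul_sum,
    Finset.mul_sum, Finset.mul_sum, ← Finset.sum_add_distrib]
  apply Finset.sum_congr rfl
  intro m hm
  have h0 : m 0 < 2 := hd m hm
  simp only [Fin.prod_univ_two, Matrix.cons_val_zero, Matrix.cons_val_one, Matrix.head_cons]
  interval_cases h : (m 0) <;> simp [h] <;> ring

lemma interp_y (p : MvPolynomial (Fin 2) ℝ) (hp : p.degreeOf 1 ≤ 1) (x y0 y1 y : ℝ) :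
    (y1 - y0) * MvPolynomial.eval ![x, y] p
      = (y1 - y) * MvPolynomial.eval ![x, y0] p + (y - y0) * MvPolynomial.eval ![x, y1] p := by
  have hd : ∀ m ∈ p.support, m 1 < 2 := by
    rw [← MvPolynomial.degreeOf_lt_iff (by norm_num)]; omega
  rw [MvPolynomial.eval_eq', MvPolynomial.eval_eq', MvPolynomial.eval_eq', Finset.mul_sum,
    Finset.mul_sum, Finset.mul_sum, ← Finset.sum_add_distrib]
  apply Finset.sum_congr rfl
  intro m hm
  have h0 : m 1 < 2 := hd m hm
  simp only [Fin.prod_univ_two, Matrix.cons_val_zero, Matrix.cons_val_one, Matrix.head_cons]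
  interval_cases h : (m 1) <;> simp [h] <;> ring

lemma find_cell (T : TMesh) {v d : ℝ × ℝ} {ε : ℝ}
    (hbad : ¬ segment ℝ v (v + ε • d) ⊆ T.skeleton)
    (hsub : segment ℝ v (v + ε • d) ⊆ T.Omega) :
    ∃ c ∈ T.cells, ∃ q ∈ segment ℝ v (v + ε • d), q ∈ interior c.toSet := by
  obtain ⟨q, hqseg, hqns⟩ := Set.not_subset.1 hbad
  obtain ⟨c, hc, hqc⟩ := exists_cell T (hsub hqseg)
  refine ⟨c, hc, q, hqseg, ?_⟩
  have hnf : q ∉ frontier c.toSet := fun h => hqns (frontier_subset_skeleton T hc h)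
  rw [c.isClosed_toSet.frontier_eq] at hnf
  by_contra hni
  exact hnf ⟨hqc, hni⟩

lemma core_le (T : TMesh) (φ : ℝ × ℝ → ℝ)
    (hc : Continuous φ)
    (h0 : ∀ p, p ∉ T.Omega → φ p = 0)
    (hX : ∀ c ∈ T.cells, ∀ q ∈ c.toSet,
      (c.xmax - c.xmin) * φ q
        = (c.xmax - q.1) * φ (c.xmin, q.2) + (q.1 - c.xmin) * φ (c.xmax, q.2))
    (hY : ∀ c ∈ T.cells, ∀ q ∈ c.toSet,
      (c.ymax - c.ymin) * φ q
        = (c.ymax - q.2) * φ (q.1, c.ymin) + (q.2 - c.ymin) * φ (q.1, c.ymax))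
    (hcv : ∀ p, IsCrossingVertex T p → φ p = 0) :
    ∀ p, φ p ≤ 0 := by
  have hΩc : IsCompact T.Omega := isCompact_Icc.prod isCompact_Icc
  have hΩne : T.Omega.Nonempty :=
    ⟨(T.outer.xmin, T.outer.ymin), ⟨le_rfl, T.outer.hx.le⟩, ⟨le_rfl, T.outer.hy.le⟩⟩
  obtain ⟨q0, hq0, hmax⟩ := hΩc.exists_isMaxOn hΩne hc.continuousOn
  set M := φ q0 with hM
  have hMle : ∀ p ∈ T.Omega, φ p ≤ M := fun p hp => hmax hp
  -- anything outside the interior of Omega vanishes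
  have hfz : ∀ p : ℝ × ℝ, p ∉ interior T.Omega → φ p = 0 := by
    intro p hp
    have h1 : Set.EqOn φ (fun _ => (0 : ℝ)) T.Omegaᶜ := fun x hx => h0 x hx
    have h2 := h1.closure hc continuous_const
    have : p ∈ closure T.Omegaᶜ := by rw [closure_compl]; exact hp
    exact h2 this
  suffices hMle0 : M ≤ 0 by
    intro p
    by_cases hp : p ∈ T.Omega
    · exact (hMle p hp).trans hMle0
    · rw [h0 p hp]
  -- the max is attained at a vertex
  set V : Set (ℝ × ℝ) := {p | IsVertexOf T p ∧ φ p = M} with hV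
  have hVfin : V.Finite := (finite_vertices T).subset fun p hp => hp.1
  have hVne : V.Nonempty := by
    obtain ⟨c, hcc, hq0c⟩ := exists_cell T hq0
    have hq1 := hq0c.1
    have hq2 := hq0c.2
    have hstep1 := step_arith (by linarith [hq1.2] : (0:ℝ) ≤ c.xmax - q0.1)
      (by linarith [hq1.1] : (0:ℝ) ≤ q0.1 - c.xmin) (by linarith [c.hx] : (0:ℝ) < c.xmax - c.xmin)
      (by ring) (hX c hcc q0 hq0c)
    have key : ∀ x : ℝ, (x = c.xmin ∨ x = c.xmax) → M ≤ φ (x, q0.2) → V.Nonempty := by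
      intro x hx hMx
      have hmem : (x, q0.2) ∈ c.toSet := by
        refine ⟨?_, hq2⟩
        rcases hx with h | h <;> rw [h]
        · exact ⟨le_rfl, c.hx.le⟩
        · exact ⟨c.hx.le, le_rfl⟩
      have hstep2 := step_arith (by linarith [hq2.2] : (0:ℝ) ≤ c.ymax - q0.2)
        (by linarith [hq2.1] : (0:ℝ) ≤ q0.2 - c.ymin) (by linarith [c.hy] : (0:ℝ) < c.ymax - c.ymin)
        (by ring) (hY c hcc (x, q0.2) hmem)
      rcases hstep2 with h | h
      · refine ⟨(x, c.ymin), ⟨c, hcc, hx, Or.inl rfl⟩, le_antisymm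
          (hMle _ (cell_subset_Omega T hcc (vertex_mem_of_corner hx (Or.inl rfl)))) ?_⟩
        exact hMx.trans h
      · refine ⟨(x, c.ymax), ⟨c, hcc, hx, Or.inr rfl⟩, le_antisymm
          (hMle _ (cell_subset_Omega T hcc (vertex_mem_of_corner hx (Or.inr rfl)))) ?_⟩
        exact hMx.trans h
    rcases hstep1 with h | h
    · exact key c.xmin (Or.inl rfl) h
    · exact key c.xmax (Or.inr rfl) h
  obtain ⟨v, hvV, hvmax⟩ := Set.exists_max_image V (fun p => toLex p) hVfin hVne
  obtain ⟨hvert, hφv⟩ := hvV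
  by_cases hint : v ∈ interior T.Omega
  swap
  · rw [← hφv]; rw [hfz v hint]
  by_cases hcross : IsCrossingVertex T v
  · rw [← hφv, hcv v hcross]
  exfalso
  -- gap bound
  obtain ⟨δ, hδpos, hδball⟩ := Metric.isOpen_iff.1 isOpen_interior v hint
  have hballΩ : Metric.ball v δ ⊆ T.Omega := hδball.trans interior_subset
  set Gaps : Set ℝ := insert 1 {r | (∃ c ∈ T.cells,
      r = |c.xmin - v.1| ∨ r = |c.xmax - v.1| ∨ r = |c.ymin - v.2| ∨ r = |c.ymax - v.2|) ∧ r ≠ 0}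
    with hGaps
  have hGfin : Gaps.Finite := by
    apply Set.Finite.insert
    apply Set.Finite.subset (Set.Finite.biUnion T.finite_cells fun c _ =>
      (Set.toFinite ({|c.xmin - v.1|, |c.xmax - v.1|, |c.ymin - v.2|, |c.ymax - v.2|} : Set ℝ)))
    rintro r ⟨⟨c, hc, hr⟩, -⟩
    exact Set.mem_biUnion hc (by simpa using hr)
  have hGne : Gaps.Nonempty := ⟨1, Set.mem_insert _ _⟩
  obtain ⟨ε₀, hε₀G, hε₀min⟩ := Set.exists_min_image Gaps id hGfin hGne
  have hε₀pos : 0 < ε₀ := by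
    rcases hε₀G with h | ⟨⟨c, hc, hr⟩, hne⟩
    · rw [h]; norm_num
    · rcases hr with h | h | h | h <;> rw [h] at hne ⊢ <;> exact (abs_pos.2 (by simpa using hne)).trans_le le_rfl
  have hgap : ∀ c ∈ T.cells, ∀ r : ℝ,
      (r = |c.xmin - v.1| ∨ r = |c.xmax - v.1| ∨ r = |c.ymin - v.2| ∨ r = |c.ymax - v.2|) →
      r ≠ 0 → ε₀ ≤ r := by
    intro c hc r hr hne
    exact hε₀min r (Set.mem_insert_of_mem _ ⟨⟨c, hc, hr⟩, hne⟩)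
  set ε : ℝ := min ε₀ δ / 2 with hεdef
  have hεpos : 0 < ε := by
    rw [hεdef]; positivity
  have hεδ : ε < δ := by
    rw [hεdef]
    have := min_le_right ε₀ δ
    linarith
  have hεε₀ : ε < ε₀ := by
    rw [hεdef]
    have := min_le_left ε₀ δ
    linarith
  -- segments of length ε lie in Omega
  have hsegΩ : ∀ d : ℝ × ℝ, ‖d‖ = 1 → segment ℝ v (v + ε • d) ⊆ T.Omega := by
    intro d hd
    refine Set.Subset.trans ?_ hballΩ
    apply (convex_ball v δ).segment_subset (Metric.mem_ball_self hδpos)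
    rw [Metric.mem_ball, dist_eq_norm, add_sub_cancel_left, norm_smul, hd, mul_one,
      Real.norm_eq_abs, abs_of_pos hεpos]
    exact hεδ
  have hnorm1 : ‖((1:ℝ), (0:ℝ))‖ = 1 := by simp [Prod.norm_def]
  have hnormm1 : ‖((-1:ℝ), (0:ℝ))‖ = 1 := by simp [Prod.norm_def]
  have hnorm2 : ‖((0:ℝ), (1:ℝ))‖ = 1 := by simp [Prod.norm_def]
  have hnormm2 : ‖((0:ℝ), (-1:ℝ))‖ = 1 := by simp [Prod.norm_def]
  have hrw1 : ∀ r : ℝ, v + (r, 0) = v + r • ((1:ℝ), (0:ℝ)) := by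
    intro r; congr 1; simp [Prod.ext_iff]
  have hrw2 : ∀ r : ℝ, v - (r, 0) = v + r • ((-1:ℝ), (0:ℝ)) := by
    intro r
    have : r • ((-1:ℝ), (0:ℝ)) = (-r, 0) := by simp [Prod.ext_iff]
    rw [this, sub_eq_add_neg]; congr 1; simp [Prod.ext_iff]
  have hrw3 : ∀ r : ℝ, v + (0, r) = v + r • ((0:ℝ), (1:ℝ)) := by
    intro r; congr 1; simp [Prod.ext_iff]
  have hrw4 : ∀ r : ℝ, v - (0, r) = v + r • ((0:ℝ), (-1:ℝ)) := by
    intro r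
    have : r • ((0:ℝ), (-1:ℝ)) = (0, -r) := by simp [Prod.ext_iff]
    rw [this, sub_eq_add_neg]; congr 1; simp [Prod.ext_iff]
  -- some direction is bad
  have hbad : (∀ e > (0:ℝ), ¬ segment ℝ v (v + e • ((1:ℝ),(0:ℝ))) ⊆ T.skeleton) ∨
      (∀ e > (0:ℝ), ¬ segment ℝ v (v + e • ((-1:ℝ),(0:ℝ))) ⊆ T.skeleton) ∨
      (∀ e > (0:ℝ), ¬ segment ℝ v (v + e • ((0:ℝ),(1:ℝ))) ⊆ T.skeleton) ∨
      (∀ e > (0:ℝ), ¬ segment ℝ v (v + e • ((0:ℝ),(-1:ℝ))) ⊆ T.skeleton) := by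
    by_contra hcon
    push_neg at hcon
    obtain ⟨⟨e1, he1, h1⟩, ⟨e2, he2, h2⟩, ⟨e3, he3, h3⟩, ⟨e4, he4, h4⟩⟩ := hcon
    set e := min (min e1 e2) (min e3 e4) with hedef
    have hepos : 0 < e := by positivity
    refine hcross ⟨hvert, hint, e, hepos, ?_, ?_, ?_, ?_⟩
    · rw [hrw1]
      exact (seg_mono v _ hepos.le ((min_le_left _ _).trans (min_le_left _ _))).trans h1
    · rw [hrw2]
      exact (seg_mono v _ hepos.le ((min_le_left _ _).trans (min_le_right _ _))).trans h2
    · rw [hrw3]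
      exact (seg_mono v _ hepos.le ((min_le_right _ _).trans (min_le_left _ _))).trans h3
    · rw [hrw4]
      exact (seg_mono v _ hepos.le ((min_le_right _ _).trans (min_le_right _ _))).trans h4
  -- helper producing the contradiction from a strictly lex-larger vertex with value M
  have contra : ∀ B : ℝ × ℝ, IsVertexOf T B → φ B = M →
      (v.1 < B.1 ∨ (B.1 = v.1 ∧ v.2 < B.2)) → False := by
    intro B hBv hBM hlt
    have := hvmax B ⟨hBv, hBM⟩
    rw [Prod.Lex.le_iff] at this
    simp only [ofLex_toLex] at this
    rcases hlt with h | ⟨h1, h2⟩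
    · rcases this with h' | ⟨h', -⟩
      · linarith
      · rw [h'] at h; linarith
    · rcases this with h' | ⟨-, h'⟩
      · rw [h1] at h'; linarith
      · linarith
  -- the vertical-edge case (v on a vertical edge of cell c)
  have vertCase : ∀ c ∈ T.cells, (c.xmin = v.1 ∨ c.xmax = v.1) →
      c.ymin < v.2 → v.2 < c.ymax → False := by
    intro c hcc hxv hy1 hy2
    have hvc : v ∈ c.toSet := by
      refine ⟨?_, ⟨hy1.le, hy2.le⟩⟩
      rcases hxv with h | h
      · exact ⟨h.le, by rw [← h]; exact c.hx.le⟩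
      · exact ⟨by rw [← h]; exact c.hx.le, h.ge⟩
    have hYv := hY c hcc v hvc
    have hAmem : ((v.1, c.ymin) : ℝ × ℝ) ∈ c.toSet := by
      refine ⟨hvc.1, ⟨le_rfl, c.hy.le⟩⟩
    have hBmem : ((v.1, c.ymax) : ℝ × ℝ) ∈ c.toSet := by
      refine ⟨hvc.1, ⟨c.hy.le, le_rfl⟩⟩
    have hA_le : φ (v.1, c.ymin) ≤ M := hMle _ (cell_subset_Omega T hcc hAmem)
    have hB_le : φ (v.1, c.ymax) ≤ M := hMle _ (cell_subset_Omega T hcc hBmem)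
    have hBM : φ (v.1, c.ymax) = M := by
      have heq' : (c.ymax - c.ymin) * M
          = (c.ymax - v.2) * φ (v.1, c.ymin) + (v.2 - c.ymin) * φ (v.1, c.ymax) := by
        rw [← hφv]; exact hYv
      exact strict_arith (by linarith : (0:ℝ) < c.ymax - v.2)
        (by linarith : (0:ℝ) < v.2 - c.ymin) (by ring) heq' hA_le hB_le
    have hBvert : IsVertexOf T ((v.1, c.ymax) : ℝ × ℝ) := by
      refine ⟨c, hcc, ?_, Or.inr rfl⟩
      rcases hxv with h | h
      · exact Or.inl h.symm
      · exact Or.inr h.symm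
    exact contra (v.1, c.ymax) hBvert hBM (Or.inr ⟨rfl, hy2⟩)
  -- the horizontal-edge case (v on a horizontal edge of cell c)
  have horizCase : ∀ c ∈ T.cells, (c.ymin = v.2 ∨ c.ymax = v.2) →
      c.xmin < v.1 → v.1 < c.xmax → False := by
    intro c hcc hyv hx1 hx2
    have hvc : v ∈ c.toSet := by
      refine ⟨⟨hx1.le, hx2.le⟩, ?_⟩
      rcases hyv with h | h
      · exact ⟨h.le, by rw [← h]; exact c.hy.le⟩
      · exact ⟨by rw [← h]; exact c.hy.le, h.ge⟩
    have hXv := hX c hcc v hvc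
    have hAmem : ((c.xmin, v.2) : ℝ × ℝ) ∈ c.toSet := ⟨⟨le_rfl, c.hx.le⟩, hvc.2⟩
    have hBmem : ((c.xmax, v.2) : ℝ × ℝ) ∈ c.toSet := ⟨⟨c.hx.le, le_rfl⟩, hvc.2⟩
    have hA_le : φ (c.xmin, v.2) ≤ M := hMle _ (cell_subset_Omega T hcc hAmem)
    have hB_le : φ (c.xmax, v.2) ≤ M := hMle _ (cell_subset_Omega T hcc hBmem)
    have hBM : φ (c.xmax, v.2) = M := by
      have heq' : (c.xmax - c.xmin) * M
          = (c.xmax - v.1) * φ (c.xmin, v.2) + (v.1 - c.xmin) * φ (c.xmax, v.2) := by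
        rw [← hφv]; exact hXv
      exact strict_arith (by linarith : (0:ℝ) < c.xmax - v.1)
        (by linarith : (0:ℝ) < v.1 - c.xmin) (by ring) heq' hA_le hB_le
    have hBvert : IsVertexOf T ((c.xmax, v.2) : ℝ × ℝ) := by
      refine ⟨c, hcc, Or.inr rfl, ?_⟩
      rcases hyv with h | h
      · exact Or.inl h.symm
      · exact Or.inr h.symm
    exact contra (c.xmax, v.2) hBvert hBM (Or.inl hx2)
  rcases hbad with hb | hb | hb | hb
  · -- right direction bad
    obtain ⟨c, hcc, q, hqseg, hqint⟩ := find_cell T (hb ε hεpos) (hsegΩ _ hnorm1)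
    obtain ⟨t, ht0, htε, rfl⟩ := seg_param hεpos.le hqseg
    rw [Rect.interior_toSet] at hqint
    obtain ⟨⟨ha1, ha2⟩, hb1, hb2⟩ := hqint
    simp only [Prod.fst_add, Prod.snd_add, Prod.smul_fst, Prod.smul_snd, smul_eq_mul,
      mul_one, mul_zero, add_zero] at ha1 ha2 hb1 hb2
    have hxv : c.xmin = v.1 := by
      rcases lt_trichotomy c.xmin v.1 with h | h | h
      · exact absurd (vertex_not_mem_interior T hvert hcc (by
          rw [Rect.interior_toSet]
          exact ⟨⟨h, lt_of_le_of_lt (le_add_of_nonneg_right ht0) ha2⟩, hb1, hb2⟩)) not_false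
      · exact h
      · exfalso
        have := hgap c hcc |c.xmin - v.1| (Or.inl rfl) (by
          rw [abs_ne_zero, sub_ne_zero]; exact ne_of_gt h)
        rw [abs_of_pos (by linarith)] at this
        linarith
    exact vertCase c hcc (Or.inl hxv) hb1 hb2
  · -- left direction bad
    obtain ⟨c, hcc, q, hqseg, hqint⟩ := find_cell T (hb ε hεpos) (hsegΩ _ hnormm1)
    obtain ⟨t, ht0, htε, rfl⟩ := seg_param hεpos.le hqseg
    rw [Rect.interior_toSet] at hqint
    obtain ⟨⟨ha1, ha2⟩, hb1, hb2⟩ := hqint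
    simp only [Prod.fst_add, Prod.snd_add, Prod.smul_fst, Prod.smul_snd, smul_eq_mul,
      mul_one, mul_zero, add_zero, mul_neg] at ha1 ha2 hb1 hb2
    -- ha1 : c.xmin < v.1 + -t ; ha2 : v.1 + -t < c.xmax
    have hxv : c.xmax = v.1 := by
      rcases lt_trichotomy c.xmax v.1 with h | h | h
      · exfalso
        have := hgap c hcc |c.xmax - v.1| (Or.inr (Or.inl rfl)) (by
          rw [abs_ne_zero, sub_ne_zero]; exact ne_of_lt h)
        rw [abs_of_neg (by linarith)] at this
        linarith
      · exact h
      · exact absurd (vertex_not_mem_interior T hvert hcc (by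
          rw [Rect.interior_toSet]
          refine ⟨⟨?_, h⟩, hb1, hb2⟩
          linarith)) not_false
    exact vertCase c hcc (Or.inr hxv) hb1 hb2
  · -- up direction bad
    obtain ⟨c, hcc, q, hqseg, hqint⟩ := find_cell T (hb ε hεpos) (hsegΩ _ hnorm2)
    obtain ⟨t, ht0, htε, rfl⟩ := seg_param hεpos.le hqseg
    rw [Rect.interior_toSet] at hqint
    obtain ⟨⟨ha1, ha2⟩, hb1, hb2⟩ := hqint
    simp only [Prod.fst_add, Prod.snd_add, Prod.smul_fst, Prod.smul_snd, smul_eq_mul,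
      mul_one, mul_zero, add_zero] at ha1 ha2 hb1 hb2
    have hyv : c.ymin = v.2 := by
      rcases lt_trichotomy c.ymin v.2 with h | h | h
      · exact absurd (vertex_not_mem_interior T hvert hcc (by
          rw [Rect.interior_toSet]
          exact ⟨⟨ha1, ha2⟩, h, lt_of_le_of_lt (le_add_of_nonneg_right ht0) hb2⟩)) not_false
      · exact h
      · exfalso
        have := hgap c hcc |c.ymin - v.2| (Or.inr (Or.inr (Or.inl rfl))) (by
          rw [abs_ne_zero, sub_ne_zero]; exact ne_of_gt h)
        rw [abs_of_pos (by linarith)] at this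
        linarith
    exact horizCase c hcc (Or.inl hyv) ha1 ha2
  · -- down direction bad
    obtain ⟨c, hcc, q, hqseg, hqint⟩ := find_cell T (hb ε hεpos) (hsegΩ _ hnormm2)
    obtain ⟨t, ht0, htε, rfl⟩ := seg_param hεpos.le hqseg
    rw [Rect.interior_toSet] at hqint
    obtain ⟨⟨ha1, ha2⟩, hb1, hb2⟩ := hqint
    simp only [Prod.fst_add, Prod.snd_add, Prod.smul_fst, Prod.smul_snd, smul_eq_mul,
      mul_one, mul_zero, add_zero, mul_neg] at ha1 ha2 hb1 hb2
    have hyv : c.ymax = v.2 := by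
      rcases lt_trichotomy c.ymax v.2 with h | h | h
      · exfalso
        have := hgap c hcc |c.ymax - v.2| (Or.inr (Or.inr (Or.inr rfl))) (by
          rw [abs_ne_zero, sub_ne_zero]; exact ne_of_lt h)
        rw [abs_of_neg (by linarith)] at this
        linarith
      · exact h
      · exact absurd (vertex_not_mem_interior T hvert hcc (by
          rw [Rect.interior_toSet]
          refine ⟨⟨ha1, ha2⟩, ?_, h⟩
          linarith)) not_false
    exact horizCase c hcc (Or.inr hyv) ha1 ha2

lemma vanish_of_bilinear (T : TMesh) (φ : ℝ × ℝ → ℝ)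
    (hc : Continuous φ)
    (h0 : ∀ p, p ∉ T.Omega → φ p = 0)
    (hX : ∀ c ∈ T.cells, ∀ q ∈ c.toSet,
      (c.xmax - c.xmin) * φ q
        = (c.xmax - q.1) * φ (c.xmin, q.2) + (q.1 - c.xmin) * φ (c.xmax, q.2))
    (hY : ∀ c ∈ T.cells, ∀ q ∈ c.toSet,
      (c.ymax - c.ymin) * φ q
        = (c.ymax - q.2) * φ (q.1, c.ymin) + (q.2 - c.ymin) * φ (q.1, c.ymax))
    (hcv : ∀ p, IsCrossingVertex T p → φ p = 0) :
    φ = 0 := by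
  have h1 := core_le T φ hc h0 hX hY hcv
  have h2 := core_le T (fun p => -φ p) hc.neg (fun p hp => by simp [h0 p hp])
    (fun c hcc q hq => by have := hX c hcc q hq; ring_nf; ring_nf at this; linarith)
    (fun c hcc q hq => by have := hY c hcc q hq; ring_nf; ring_nf at this; linarith)
    (fun p hp => by simp [hcv p hp])
  funext p
  have ha := h1 p
  have hb := h2 p
  simp only [neg_nonpos] at hb
  simp only [Pi.zero_apply]
  linarith

lemma sbar_continuous {T : TMesh} {f : ℝ × ℝ → ℝ} (hf : f ∈ SBar 1 1 0 0 T) :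
    Continuous f := by
  obtain ⟨-, -, hs, -, -⟩ := hf
  have := hs 0 0 (by norm_num) (by norm_num)
  have heq : mpW Set.univ 0 0 f = f := rfl
  rw [heq] at this
  exact continuousOn_univ.1 this

lemma sbar_interpX {T : TMesh} {f : ℝ × ℝ → ℝ} (hf : f ∈ SBar 1 1 0 0 T) :
    ∀ c ∈ T.cells, ∀ q ∈ c.toSet,
      (c.xmax - c.xmin) * f q
        = (c.xmax - q.1) * f (c.xmin, q.2) + (q.1 - c.xmin) * f (c.xmax, q.2) := by
  intro c hc q hq
  obtain ⟨-, hpoly, -⟩ := hf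
  obtain ⟨p, hp0, hp1, hpe⟩ := hpoly c hc
  have e1 := hpe q hq
  have e2 := hpe (c.xmin, q.2) ⟨⟨le_rfl, c.hx.le⟩, hq.2⟩
  have e3 := hpe (c.xmax, q.2) ⟨⟨c.hx.le, le_rfl⟩, hq.2⟩
  simp only at e2 e3
  rw [e1, e2, e3]
  exact interp_x p hp0 c.xmin c.xmax q.1 q.2

lemma sbar_interpY {T : TMesh} {f : ℝ × ℝ → ℝ} (hf : f ∈ SBar 1 1 0 0 T) :
    ∀ c ∈ T.cells, ∀ q ∈ c.toSet,
      (c.ymax - c.ymin) * f q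
        = (c.ymax - q.2) * f (q.1, c.ymin) + (q.2 - c.ymin) * f (q.1, c.ymax) := by
  intro c hc q hq
  obtain ⟨-, hpoly, -⟩ := hf
  obtain ⟨p, hp0, hp1, hpe⟩ := hpoly c hc
  have e1 := hpe q hq
  have e2 := hpe (q.1, c.ymin) ⟨hq.1, ⟨le_rfl, c.hy.le⟩⟩
  have e3 := hpe (q.1, c.ymax) ⟨hq.1, ⟨c.hy.le, le_rfl⟩⟩
  simp only at e2 e3
  rw [e1, e2, e3]
  exact interp_y p hp1 q.1 c.ymin c.ymax q.2

end AuxProof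

/-- If `f ∈ S̄(1,1,0,0,T)` vanishes at every crossing vertex then `f ≡ 0`; consequently the
crossing vertices form a determining set (evaluation at them is injective on the space). -/
theorem crossing_vertices_determining (T : TMesh) :
    (∀ f ∈ SBar 1 1 0 0 T, (∀ p, IsCrossingVertex T p → f p = 0) → f = 0) ∧
    (∀ f ∈ SBar 1 1 0 0 T, ∀ g ∈ SBar 1 1 0 0 T,
      (∀ p, IsCrossingVertex T p → f p = g p) → f = g) := by
  constructor
  · intro f hf hv
    exact vanish_of_bilinear T f (sbar_continuous hf) hf.1 (sbar_interpX hf) (sbar_interpY hf) hv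
  · intro f hf g hg hfg
    have hz : (fun p => f p - g p) = 0 := by
      apply vanish_of_bilinear T _ ((sbar_continuous hf).sub (sbar_continuous hg))
      · intro p hp
        simp [hf.1 p hp, hg.1 p hp]
      · intro c hc q hq
        have h1 := sbar_interpX hf c hc q hq
        have h2 := sbar_interpX hg c hc q hq
        ring_nf
        simp only [Pi.sub_apply]
        ring_nf at h1 h2
        linarith
      · intro c hc q hq
        have h1 := sbar_interpY hf c hc q hq
        have h2 := sbar_interpY hg c hc q hq
        ring_nf
        simp only [Pi.sub_apply]
        ring_nf at h1 h2
        linarith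
      · intro p hp
        simp [hfg p hp]
    funext p
    have := congrFun hz p
    simp only [Pi.zero_apply] at this
    linarith
end
end
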